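/- arXiv:2006.12966 — 12 statements merged into one kernel-verified Lean document; each statement's English description precedes it below -/
import Mathlib

section
/- Fix ψ > 1 and μ ∈ ℝ, and consider real sequences (x_t)_{t≥0} satisfying x_{t+1} = max{−μ, ψ x_t} for all t ≥ 0. (i) If μ < 0, then every such sequence diverges to +∞; in particular no bounded solution exists. (ii) If μ ≥ 0, then for every t ≥ 1 any solution with x_0 ≤ 0 satisfies x_t ∈ [−μ, 0] (so bounded solutions exist), while every solution with x_0 > 0 diverges to +∞. Consequently, a bounded solution exists if and only if μ ≥ 0. -/
/-! Every solution satisfies `x (t + 1) ≥ ψ x t`, so once it is positive it grows at least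
geometrically with ratio `ψ > 1`. For `μ < 0` the floor `-μ` is positive, hence every solution is
positive from `t = 1` on. For `μ ≥ 0` the floor is nonpositive, so `(-∞, 0]` is invariant, and
the constant `-μ` is a bounded solution. -/

open Filter

lemma tendsto_atTop_of_geom_le_of_pos {ψ : ℝ} (hψ : 1 < ψ) {x : ℕ → ℝ}
    (hx : ∀ t, ψ * x t ≤ x (t + 1)) {t₀ : ℕ} (h₀ : 0 < x t₀) : Tendsto x atTop atTop :=
  (tendsto_add_atTop_iff_nat t₀).mp <|
    tendsto_atTop_of_geom_le (by simpa using h₀) hψ fun n => by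
      simpa only [Nat.add_right_comm] using hx (n + t₀)

lemma not_exists_abs_le_of_tendsto_atTop {x : ℕ → ℝ} (hx : Tendsto x atTop atTop) :
    ¬ ∃ B : ℝ, ∀ t, |x t| ≤ B := by
  rintro ⟨B, hB⟩
  exact not_bddAbove_of_tendsto_atTop hx ⟨B, by
    rintro _ ⟨t, rfl⟩
    exact (le_abs_self _).trans (hB t)⟩

namespace AbsorbingDynamics

lemma exists_bounded_solution {ψ μ : ℝ} (hψ : 1 ≤ ψ) (hμ : 0 ≤ μ) :
    ∃ x : ℕ → ℝ, (∀ t, x (t + 1) = max (-μ) (ψ * x t)) ∧ ∃ B : ℝ, ∀ t, |x t| ≤ B :=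
  ⟨fun _ => -μ, fun _ => (max_eq_left (by nlinarith)).symm, μ, fun _ => by
    rw [abs_neg, abs_of_nonneg hμ]⟩

variable {ψ μ : ℝ} {x : ℕ → ℝ} (hx : ∀ t, x (t + 1) = max (-μ) (ψ * x t))
include hx

lemma neg_le_succ (t : ℕ) : -μ ≤ x (t + 1) :=
  (hx t).ge.trans' (le_max_left _ _)

lemma mul_le_succ (t : ℕ) : ψ * x t ≤ x (t + 1) :=
  (hx t).ge.trans' (le_max_right _ _)

lemma tendsto_atTop_of_pos (hψ : 1 < ψ) {t₀ : ℕ} (h₀ : 0 < x t₀) : Tendsto x atTop atTop :=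
  tendsto_atTop_of_geom_le_of_pos hψ (mul_le_succ hx) h₀

lemma tendsto_atTop_of_neg (hψ : 1 < ψ) (hμ : μ < 0) : Tendsto x atTop atTop :=
  tendsto_atTop_of_pos hx hψ (t₀ := 1) ((neg_pos.mpr hμ).trans_le (neg_le_succ hx 0))

lemma nonpos_of_nonpos (hψ : 0 ≤ ψ) (hμ : 0 ≤ μ) (h₀ : x 0 ≤ 0) (t : ℕ) : x t ≤ 0 := by
  induction t with
  | zero => exact h₀
  | succ t ih =>
    rw [hx t]
    exact max_le (neg_nonpos.mpr hμ) (mul_nonpos_of_nonneg_of_nonpos hψ ih)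

lemma mem_Icc_of_nonpos (hψ : 0 ≤ ψ) (hμ : 0 ≤ μ) (h₀ : x 0 ≤ 0) {t : ℕ} (ht : 1 ≤ t) :
    x t ∈ Set.Icc (-μ) 0 := by
  obtain ⟨s, rfl⟩ := Nat.exists_eq_add_of_le' ht
  exact ⟨neg_le_succ hx s, nonpos_of_nonpos hx hψ hμ h₀ _⟩

end AbsorbingDynamics

open AbsorbingDynamics

/-- Coherency of the absorbing-state dynamics `x_{t+1} = max {−μ, ψ x_t}` with an
active Taylor rule `ψ > 1`: (i) if `μ < 0` every solution diverges to `+∞` (so no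
bounded solution exists), (ii) if `μ ≥ 0` any solution starting at `x 0 ≤ 0` stays
in `[−μ, 0]` from `t = 1` on, while any solution with `x 0 > 0` diverges to `+∞`;
consequently a bounded solution exists iff `μ ≥ 0`. -/
theorem bounded_solution_iff_mu_nonneg (ψ μ : ℝ) (hψ : 1 < ψ) :
    (μ < 0 → ∀ x : ℕ → ℝ, (∀ t, x (t + 1) = max (-μ) (ψ * x t)) →
        Tendsto x atTop atTop) ∧
    (μ < 0 → ¬ ∃ x : ℕ → ℝ, (∀ t, x (t + 1) = max (-μ) (ψ * x t)) ∧
        ∃ B : ℝ, ∀ t, |x t| ≤ B) ∧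
    (0 ≤ μ → ∀ x : ℕ → ℝ, (∀ t, x (t + 1) = max (-μ) (ψ * x t)) →
        ((x 0 ≤ 0 → ∀ t, 1 ≤ t → x t ∈ Set.Icc (-μ) 0) ∧
         (0 < x 0 → Tendsto x atTop atTop))) ∧
    ((∃ x : ℕ → ℝ, (∀ t, x (t + 1) = max (-μ) (ψ * x t)) ∧
        ∃ B : ℝ, ∀ t, |x t| ≤ B) ↔ 0 ≤ μ) := by
  have no_bounded_of_neg (hμ : μ < 0) :
      ¬ ∃ x : ℕ → ℝ, (∀ t, x (t + 1) = max (-μ) (ψ * x t)) ∧ ∃ B : ℝ, ∀ t, |x t| ≤ B :=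
    fun ⟨x, hx, hB⟩ => not_exists_abs_le_of_tendsto_atTop (tendsto_atTop_of_neg hx hψ hμ) hB
  refine ⟨fun hμ x hx => tendsto_atTop_of_neg hx hψ hμ, no_bounded_of_neg, ?_, ?_⟩
  · exact fun hμ x hx => ⟨fun h₀ _ ht => mem_Icc_of_nonpos hx (by linarith) hμ h₀ ht,
      fun h₀ => tendsto_atTop_of_pos hx hψ h₀⟩
  · exact ⟨fun h => not_lt.mp fun hμ => no_bounded_of_neg hμ h,
      exists_bounded_solution hψ.le⟩
end

section
/- Let 0 < p < 1, ψ > 1, r > 0, π* > 0 with μ := log(rπ*) ≥ 0, let π̄ ∈ (0, π*] satisfy rπ̄ − 1 + p > 0, and let r^L < 0. Define D := (−∞, (log(π̄/π*) − log(1−p))/ψ) and g : D → ℝ by g(x) = log( (p π̄/π*) / (rπ̄ − 1 + p) ) − r^L for x ≤ −μ/ψ, and g(x) = log( (p π̄/π*) / (π̄/π* − (1−p)e^{ψx}) ) + ψx − r^L for −μ/ψ < x, x ∈ D. Then g has a fixed point in D if and only if −r^L ≤ −μ/ψ − log( (p π̄/π*) / (rπ̄ − 1 + p) ); moreover, when this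 inequality fails, g(x) > x for every x ∈ D. -/
/-!
With `b = π̄/π*`, `q = 1 - p` and `K = rπ*`, the kink of `g` sits at `-μ/ψ = -(log K)/ψ`, where
`b - q e^{ψx}` equals `(rπ̄ - 1 + p)/K`. To the left of the kink `g` is the constant
`C = log(pb/(rπ̄ - 1 + p)) - r^L`; to the right, `b - q e^{ψx}` decreases, so
`g x > C + μ + ψx ≥ x + (C + μ/ψ)` because `ψ > 1`. Hence `g` stays above the line of slope one
through `(-μ/ψ, C)`: it meets the diagonal iff `C ≤ -μ/ψ` (then `C` itself is a fixed point),
and otherwise lies strictly above it.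
-/

open Real Set

section KinkedMap

variable {g : ℝ → ℝ} {x₀ B C : ℝ}

theorem lt_apply_of_flat_of_le_add (hC : x₀ < C) (hflat : ∀ x ≤ x₀, g x = C)
    (hsteep : ∀ x ∈ Ioo x₀ B, x + (C - x₀) ≤ g x) {x : ℝ} (hx : x < B) : x < g x := by
  rcases le_or_gt x x₀ with hle | hgt
  · rw [hflat x hle]
    linarith
  · linarith [hsteep x ⟨hgt, hx⟩]

theorem exists_fixed_iff_of_flat_of_le_add (hx₀B : x₀ < B) (hflat : ∀ x ≤ x₀, g x = C)
    (hsteep : ∀ x ∈ Ioo x₀ B, x + (C - x₀) ≤ g x) : (∃ x ∈ Iio B, g x = x) ↔ C ≤ x₀ := by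
  refine ⟨fun ⟨x, hxB, hfix⟩ => ?_, fun hC => ⟨C, hC.trans_lt hx₀B, hflat C hC⟩⟩
  by_contra! hC
  exact (lt_apply_of_flat_of_le_add hC hflat hsteep hxB).ne' hfix

end KinkedMap

theorem log_div_sub_mul_exp_lt_log_div_sub_mul_exp {a b q s t : ℝ} (ha : 0 < a) (hq : 0 < q)
    (hst : s < t) (ht : q * exp t < b) :
    log (a / (b - q * exp s)) < log (a / (b - q * exp t)) := by
  have hexp : q * exp s < q * exp t := mul_lt_mul_of_pos_left (exp_lt_exp.mpr hst) hq
  exact log_lt_log (div_pos ha (by linarith))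
    (div_lt_div_of_pos_left ha (by linarith) (by linarith))

theorem log_div_sub_mul_exp_neg_log {a b q K : ℝ} (ha : 0 < a) (hK : 0 < K)
    (hd : 0 < K * b - q) :
    log (a / (b - q * exp (-log K))) = log (a / (K * b - q)) + log K := by
  have hval : a / (b - q * exp (-log K)) = a / (K * b - q) * K := by
    rw [exp_neg, exp_log hK]
    field_simp
  rw [hval, log_mul (div_pos ha hd).ne' hK.ne']

theorem lt_div_iff_mul_exp_lt {ψ b q x : ℝ} (hψ : 0 < ψ) (hb : 0 < b) (hq : 0 < q) :
    x < (log b - log q) / ψ ↔ q * exp (ψ * x) < b := by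
  rw [lt_div_iff₀ hψ, ← log_div hb.ne' hq.ne', mul_comm, lt_log_iff_exp_lt (div_pos hb hq),
    lt_div_iff₀' hq]

theorem transitory_fixed_point_iff_support_restriction_general
    (p ψ r pis pib rL : ℝ)
    (hp0 : 0 < p) (hp1 : p < 1) (hψ : 1 < ψ) (hr : 0 < r) (hpis : 0 < pis)
    (hpib0 : 0 < pib)
    (hden : 0 < r * pib - 1 + p) :
    (let μ : ℝ := Real.log (r * pis)
     let D : Set ℝ := Set.Iio ((Real.log (pib / pis) - Real.log (1 - p)) / ψ)
     let g : ℝ → ℝ := fun x =>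
       if x ≤ -μ / ψ then
         Real.log ((p * (pib / pis)) / (r * pib - 1 + p)) - rL
       else
         Real.log ((p * (pib / pis)) / (pib / pis - (1 - p) * Real.exp (ψ * x)))
           + ψ * x - rL
     ((∃ x ∈ D, g x = x) ↔
        -rL ≤ -μ / ψ - Real.log ((p * (pib / pis)) / (r * pib - 1 + p))) ∧
     (¬ (-rL ≤ -μ / ψ - Real.log ((p * (pib / pis)) / (r * pib - 1 + p))) →
        ∀ x ∈ D, x < g x)) := by
  intro μ D g
  set c := log (p * (pib / pis) / (r * pib - 1 + p))
  have hψ0 : 0 < ψ := by linarith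
  have hb : 0 < pib / pis := div_pos hpib0 hpis
  have hq : 0 < 1 - p := by linarith
  have hK : 0 < r * pis := mul_pos hr hpis
  have hd : r * pis * (pib / pis) - (1 - p) = r * pib - 1 + p := by field_simp; ring
  have hkink : -μ / ψ < (log (pib / pis) - log (1 - p)) / ψ := by
    rw [lt_div_iff_mul_exp_lt hψ0 hb hq, mul_div_cancel₀ _ hψ0.ne', exp_neg, exp_log hK]
    rw [← hd] at hden
    rw [← div_eq_mul_inv, div_lt_iff₀ hK]
    linarith
  have hsteep : ∀ x ∈ Ioo (-μ / ψ) ((log (pib / pis) - log (1 - p)) / ψ),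
      x + (c - rL - -μ / ψ) ≤ g x := by
    rintro x ⟨hx₀, hxB⟩
    rw [lt_div_iff_mul_exp_lt hψ0 hb hq] at hxB
    have hψx : -μ < ψ * x := by rwa [div_lt_iff₀ hψ0, mul_comm] at hx₀
    have hlog := log_div_sub_mul_exp_lt_log_div_sub_mul_exp (mul_pos hp0 hb) hq hψx hxB
    rw [log_div_sub_mul_exp_neg_log (mul_pos hp0 hb) hK (hd ▸ hden), hd] at hlog
    have hslope : x - -μ / ψ ≤ ψ * x + μ :=
      calc x - -μ / ψ ≤ ψ * (x - -μ / ψ) := le_mul_of_one_le_left (sub_pos.mpr hx₀).le hψ.le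
        _ = ψ * x + μ := by field_simp; ring
    simp only [g, if_neg (not_le.mpr hx₀)]
    linarith
  have hflat : ∀ x ≤ -μ / ψ, g x = c - rL := fun x hx => if_pos hx
  have hrestrict : (-rL ≤ -μ / ψ - c) ↔ c - rL ≤ -μ / ψ := by constructor <;> intro h <;> linarith
  rw [hrestrict]
  exact ⟨exists_fixed_iff_of_flat_of_le_add hkink hflat hsteep,
    fun hC x hx => lt_apply_of_flat_of_le_add (not_le.mp hC) hflat hsteep hx⟩

/-- Transitory-state coherency of the nonlinear model: the transition map `g` for
log inflation deviations in the transitory state has a fixed point on its domain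
`D` iff the negative real-rate shock satisfies the support restriction
`−r^L ≤ −μ/ψ − log((p π̄/π*)/(rπ̄ − 1 + p))`; when the restriction fails,
`g x > x` for every `x ∈ D`. -/
theorem transitory_fixed_point_iff_support_restriction
    (p ψ r pis pib rL : ℝ)
    (hp0 : 0 < p) (hp1 : p < 1) (hψ : 1 < ψ) (hr : 0 < r) (hpis : 0 < pis)
    (hμ : 0 ≤ Real.log (r * pis))
    (hpib0 : 0 < pib) (hpib : pib ≤ pis)
    (hden : 0 < r * pib - 1 + p) (hrL : rL < 0) :
    (let μ : ℝ := Real.log (r * pis)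
     let D : Set ℝ := Set.Iio ((Real.log (pib / pis) - Real.log (1 - p)) / ψ)
     let g : ℝ → ℝ := fun x =>
       if x ≤ -μ / ψ then
         Real.log ((p * (pib / pis)) / (r * pib - 1 + p)) - rL
       else
         Real.log ((p * (pib / pis)) / (pib / pis - (1 - p) * Real.exp (ψ * x)))
           + ψ * x - rL
     ((∃ x ∈ D, g x = x) ↔
        -rL ≤ -μ / ψ - Real.log ((p * (pib / pis)) / (r * pib - 1 + p))) ∧
     (¬ (-rL ≤ -μ / ψ - Real.log ((p * (pib / pis)) / (r * pib - 1 + p))) →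
        ∀ x ∈ D, x < g x)) :=
  transitory_fixed_point_iff_support_restriction_general p ψ r pis pib rL hp0 hp1 hψ hr hpis hpib0
    hden
end

section
/- Let ψ > 1, p, q ∈ [0,1], β ∈ (0,1), σ > 0, λ > 0. Define K := [[p, 1−p],[1−q, q]], Q := I₂ − K − β(I₂ − K)K − λσK, e₁ := (1,0)ᵀ, e₂ := (0,1)ᵀ, and the matrices A₁ := Q + λσψ I₂, A₂ := Q + λσψ e₂e₂ᵀ, A₃ := Q + λσψ e₁e₁ᵀ, A₄ := Q. Then det A₁ > 0, and either det A₄ ≤ 0 or det A₂ < 0. In particular, the four determinants det A₁, det A₂, det A₃, det A₄ do not all share the same strict sign, so the coherency condition fails: the New Keynesian model with an active Taylor rule is not generically coherent. -/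
/-!
`K` has eigenvalues `1` and `r = p + q - 1`, and `Q = (1 - K)(1 - βK) - aK` (with `a = λσ`) is a
polynomial in `K`, with eigenvalues `-a` and `(1 - r)(1 - βr) - ar`. Hence
`det A₁ = a(ψ - 1)((1 - r)(1 - βr) + a(ψ - r)) > 0`, while `det A₄ = det Q` and
`det A₂ = det Q + aψ Q₀₀`. If `det Q > 0` then `Q₀₀ = (1 - p)(1 - βr) - ap < 0`, so
`det A₂ < det Q + a Q₀₀ = -a(1 - q)(1 - βr + a) ≤ 0`.
-/

open Matrix

namespace Matrix

variable {R : Type*} [CommRing R]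

theorem det_fin_two_add_smul_one (M : Matrix (Fin 2) (Fin 2) R) (c : R) :
    (M + c • (1 : Matrix (Fin 2) (Fin 2) R)).det = M.det + c * M.trace + c ^ 2 := by
  simp only [det_fin_two, trace_fin_two, add_apply, smul_apply, one_apply_eq,
    one_apply_ne (show (0 : Fin 2) ≠ 1 by decide), one_apply_ne (show (1 : Fin 2) ≠ 0 by decide),
    smul_eq_mul]
  ring

theorem det_fin_two_add_smul_single_one_one (M : Matrix (Fin 2) (Fin 2) R) (c : R) :
    (M + c • !![(0 : R), 0; 0, 1]).det = M.det + c * M 0 0 := by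
  simp only [det_fin_two, add_apply, smul_apply, of_apply, cons_val', cons_val_zero, cons_val_one,
    empty_val', cons_val_fin_one, smul_eq_mul]
  ring

end Matrix

/-- The matrix `Q` of the piecewise linear system, with `a = λσ`. -/
def nkMatrix (p q β a : ℝ) : Matrix (Fin 2) (Fin 2) ℝ :=
  1 - !![p, 1 - p; 1 - q, q] - β • ((1 - !![p, 1 - p; 1 - q, q]) * !![p, 1 - p; 1 - q, q]) -
    a • !![p, 1 - p; 1 - q, q]

theorem one_sub_mul_add_sub_one_pos {p q β : ℝ} (hp : p ∈ Set.Icc (0 : ℝ) 1)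
    (hq : q ∈ Set.Icc (0 : ℝ) 1) (hβ : |β| < 1) : 0 < 1 - β * (p + q - 1) := by
  have hr : |p + q - 1| ≤ 1 := abs_le.2 ⟨by linarith [hp.1, hq.1], by linarith [hp.2, hq.2]⟩
  have : |β * (p + q - 1)| < 1 := by
    rw [abs_mul]
    nlinarith [abs_nonneg β, abs_nonneg (p + q - 1)]
  linarith [le_abs_self (β * (p + q - 1))]

namespace nkMatrix

variable (p q β a : ℝ)

-- Each row of `1 - K` is a multiple of `(1, -1)`, which `K` maps to `(p + q - 1) • (1, -1)`.
theorem eq_explicit :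
    nkMatrix p q β a =
      !![(1 - p) * (1 - β * (p + q - 1)) - a * p, -((1 - p) * (1 - β * (p + q - 1))) - a * (1 - p);
        -((1 - q) * (1 - β * (p + q - 1))) - a * (1 - q), (1 - q) * (1 - β * (p + q - 1)) - a * q] := by
  ext i j
  fin_cases i <;> fin_cases j <;> simp [nkMatrix, mul_apply, Fin.sum_univ_two] <;> ring

theorem apply_zero_zero :
    nkMatrix p q β a 0 0 = (1 - p) * (1 - β * (p + q - 1)) - a * p := by
  rw [eq_explicit]
  rfl

theorem trace :
    (nkMatrix p q β a).trace = (2 - p - q) * (1 - β * (p + q - 1)) - a * (p + q) := by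
  rw [eq_explicit, trace_fin_two_of]
  ring

theorem det :
    (nkMatrix p q β a).det = a * (a * (p + q - 1) - (2 - p - q) * (1 - β * (p + q - 1))) := by
  rw [eq_explicit, det_fin_two_of]
  ring

variable {p q β a} {ψ : ℝ}

theorem det_add_smul_one_pos (hp : p ∈ Set.Icc (0 : ℝ) 1) (hq : q ∈ Set.Icc (0 : ℝ) 1)
    (hβ : |β| < 1) (ha : 0 < a) (hψ : 1 < ψ) :
    0 < (nkMatrix p q β a + (a * ψ) • (1 : Matrix (Fin 2) (Fin 2) ℝ)).det := by
  have factor : (nkMatrix p q β a + (a * ψ) • (1 : Matrix (Fin 2) (Fin 2) ℝ)).det =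
      a * (ψ - 1) * ((2 - p - q) * (1 - β * (p + q - 1)) + a * (ψ - (p + q - 1))) := by
    rw [det_fin_two_add_smul_one, det, trace]
    ring
  have h_stable : 0 ≤ (2 - p - q) * (1 - β * (p + q - 1)) :=
    mul_nonneg (by linarith [hp.2, hq.2]) (one_sub_mul_add_sub_one_pos hp hq hβ).le
  have h_active : 0 < a * (ψ - (p + q - 1)) := mul_pos ha (by linarith [hp.2, hq.2])
  rw [factor]
  exact mul_pos (mul_pos ha (by linarith)) (by linarith)

theorem det_nonpos_or_det_add_smul_single_one_one_neg (hp : p ∈ Set.Icc (0 : ℝ) 1)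
    (hq : q ∈ Set.Icc (0 : ℝ) 1) (hβ : |β| < 1) (ha : 0 < a) (hψ : 1 < ψ) :
    (nkMatrix p q β a).det ≤ 0 ∨ (nkMatrix p q β a + (a * ψ) • !![(0 : ℝ), 0; 0, 1]).det < 0 := by
  rw [or_iff_not_imp_left, not_le, det_fin_two_add_smul_single_one_one]
  intro h_det
  set s := 1 - β * (p + q - 1) with hs_def
  have hs : 0 < s := one_sub_mul_add_sub_one_pos hp hq hβ
  have h_corner_neg : nkMatrix p q β a 0 0 < 0 := by
    rw [apply_zero_zero, ← hs_def]
    have h_unstable : (2 - p - q) * s < a * (p + q - 1) := by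
      rw [det] at h_det
      nlinarith
    nlinarith [mul_le_mul_of_nonneg_right (show 1 - p ≤ 2 - p - q by linarith [hq.2]) hs.le]
  calc (nkMatrix p q β a).det + a * ψ * nkMatrix p q β a 0 0
      < (nkMatrix p q β a).det + a * nkMatrix p q β a 0 0 :=
        add_lt_add_right (mul_lt_mul_of_neg_right (lt_mul_of_one_lt_right ha hψ) h_corner_neg) _
    _ = -(a * (1 - q) * (s + a)) := by rw [det, apply_zero_zero]; ring
    _ ≤ 0 := neg_nonpos.2 (mul_nonneg (mul_nonneg ha.le (sub_nonneg.2 hq.2)) (by linarith))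

end nkMatrix

/-- The New Keynesian model with an active Taylor rule (`ψ > 1`) is not
generically coherent: among the four regime-configuration matrices
`A₁, A₂, A₃, A₄`, one has `det A₁ > 0` while either `det A₄ ≤ 0` or
`det A₂ < 0`; in particular the four determinants never all share the same
strict sign. -/
theorem nk_taylor_rule_not_coherent (ψ p q β σ lam : ℝ) (hψ : 1 < ψ)
    (hp : p ∈ Set.Icc (0:ℝ) 1) (hq : q ∈ Set.Icc (0:ℝ) 1)
    (hβ : β ∈ Set.Ioo (0:ℝ) 1) (hσ : 0 < σ) (hlam : 0 < lam) :
    (let K : Matrix (Fin 2) (Fin 2) ℝ := !![p, 1 - p; 1 - q, q]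
     let Q : Matrix (Fin 2) (Fin 2) ℝ := 1 - K - β • ((1 - K) * K) - (lam * σ) • K
     let A₁ : Matrix (Fin 2) (Fin 2) ℝ := Q + (lam * σ * ψ) • (1 : Matrix (Fin 2) (Fin 2) ℝ)
     let A₂ : Matrix (Fin 2) (Fin 2) ℝ := Q + (lam * σ * ψ) • !![(0:ℝ), 0; 0, 1]
     let A₃ : Matrix (Fin 2) (Fin 2) ℝ := Q + (lam * σ * ψ) • !![(1:ℝ), 0; 0, 0]
     let A₄ : Matrix (Fin 2) (Fin 2) ℝ := Q
     0 < A₁.det ∧ (A₄.det ≤ 0 ∨ A₂.det < 0) ∧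
     ¬ ((0 < A₁.det ∧ 0 < A₂.det ∧ 0 < A₃.det ∧ 0 < A₄.det) ∨
        (A₁.det < 0 ∧ A₂.det < 0 ∧ A₃.det < 0 ∧ A₄.det < 0))) := by
  intro K Q A₁ A₂ A₃ A₄
  have hβ' : |β| < 1 := abs_lt.2 ⟨by linarith [hβ.1], hβ.2⟩
  have ha : 0 < lam * σ := mul_pos hlam hσ
  have h₁ : 0 < A₁.det := nkMatrix.det_add_smul_one_pos hp hq hβ' ha hψ
  have h₄₂ : A₄.det ≤ 0 ∨ A₂.det < 0 :=
    nkMatrix.det_nonpos_or_det_add_smul_single_one_one_neg hp hq hβ' ha hψ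
  refine ⟨h₁, h₄₂, ?_⟩
  rintro (⟨-, h₂, -, h₄⟩ | ⟨h₁', -⟩)
  · rcases h₄₂ with h | h <;> linarith
  · linarith
end

section
/- Let p ∈ ℝ, β, σ, λ, ψ, ψ_x ∈ ℝ with λ ≠ 0, set K := [[p, 1−p],[0, 1]], Q := I₂ − K − β(I₂ − K)K − λσK, e₂ := (0,1)ᵀ, A₂ := Q + λσ(ψ I₂ − (ψ_x/λ)(I₂ − βK)) e₂e₂ᵀ, and A₄ := Q. Then det A₂ = −det A₄ · (ψ + ((β−1)/λ)ψ_x − 1). Consequently, if the Taylor principle ψ + ((β−1)/λ)ψ_x > 1 holds and det A₄ ≠ 0, then det A₂ and det A₄ have strictly opposite signs, so the coherency condition fails. -/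
/-!
Since the second state is absorbing, the second row of `I - K` vanishes, so the second row of
`Q = I - K - β (I - K) K - λσ K` is `(0, -λσ)` and `det Q = -λσ Q₀₀`. The regime matrix `A₂`
differs from `Q` only in its second column, and as `Q` is upper triangular its determinant is
`Q₀₀ A₂₁₁ = Q₀₀ (-λσ + λσ (ψ + ((β-1)/λ) ψ_x))`.
-/

open Matrix

theorem Matrix.det_fin_two_add_mul_col_one {R : Type*} [CommRing R]
    (A B : Matrix (Fin 2) (Fin 2) R) :
    (A + B * !![0, 0; 0, 1]).det = A.det + A 0 0 * B 1 1 - A 1 0 * B 0 1 := by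
  simp only [det_fin_two, add_apply, mul_apply, of_apply, cons_val', cons_val_zero,
    cons_val_one, cons_val_fin_one, Fin.sum_univ_two, mul_zero, mul_one, add_zero, zero_add]
  ring

section BindingRegime

variable {R : Type*} [CommRing R] (K : Matrix (Fin 2) (Fin 2) R) (β c : R)

/-- The paper's `A₄ = Q`, with `c` in the role of `λσ`. -/
def bindingRegimeMatrix : Matrix (Fin 2) (Fin 2) R :=
  1 - K - β • ((1 - K) * K) - c • K

variable {K}

theorem bindingRegimeMatrix_one_zero (hK₀ : K 1 0 = 0) (hK₁ : K 1 1 = 1) :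
    bindingRegimeMatrix K β c 1 0 = 0 := by
  simp [bindingRegimeMatrix, mul_apply, Fin.sum_univ_two, hK₀, hK₁]

theorem bindingRegimeMatrix_one_one (hK₀ : K 1 0 = 0) (hK₁ : K 1 1 = 1) :
    bindingRegimeMatrix K β c 1 1 = -c := by
  simp [bindingRegimeMatrix, mul_apply, Fin.sum_univ_two, hK₀, hK₁]

theorem det_bindingRegimeMatrix (hK₀ : K 1 0 = 0) (hK₁ : K 1 1 = 1) :
    (bindingRegimeMatrix K β c).det = -(c * bindingRegimeMatrix K β c 0 0) := by
  rw [det_fin_two, bindingRegimeMatrix_one_zero β c hK₀ hK₁,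
    bindingRegimeMatrix_one_one β c hK₀ hK₁]
  ring

theorem det_bindingRegimeMatrix_add_mul_col_one (hK₀ : K 1 0 = 0) (hK₁ : K 1 1 = 1)
    (B : Matrix (Fin 2) (Fin 2) R) :
    (bindingRegimeMatrix K β c + c • (B * !![0, 0; 0, 1])).det =
      -(bindingRegimeMatrix K β c).det * (B 1 1 - 1) := by
  rw [← smul_mul_assoc, det_fin_two_add_mul_col_one, bindingRegimeMatrix_one_zero β c hK₀ hK₁,
    det_bindingRegimeMatrix β c hK₀ hK₁, Matrix.smul_apply, smul_eq_mul]
  ring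

end BindingRegime

theorem nk_absorbing_det_identity_general (p β σ lam ψ ψx : ℝ) :
    (let K : Matrix (Fin 2) (Fin 2) ℝ := !![p, 1 - p; 0, 1]
     let Q : Matrix (Fin 2) (Fin 2) ℝ := 1 - K - β • ((1 - K) * K) - (lam * σ) • K
     let A₂ : Matrix (Fin 2) (Fin 2) ℝ :=
       Q + (lam * σ) • ((ψ • (1 : Matrix (Fin 2) (Fin 2) ℝ)
            - (ψx / lam) • ((1 : Matrix (Fin 2) (Fin 2) ℝ) - β • K)) * !![(0:ℝ), 0; 0, 1])
     let A₄ : Matrix (Fin 2) (Fin 2) ℝ := Q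
     A₂.det = -A₄.det * (ψ + ((β - 1) / lam) * ψx - 1) ∧
     (1 < ψ + ((β - 1) / lam) * ψx → A₄.det ≠ 0 → A₂.det * A₄.det < 0)) := by
  intro K Q A₂ A₄
  have hB : (ψ • 1 - (ψx / lam) • (1 - β • K)) 1 1 = ψ + ((β - 1) / lam) * ψx := by
    simp only [K, smul_of, smul_cons, smul_eq_mul, smul_empty, mul_zero, mul_one,
      Matrix.sub_apply, Matrix.smul_apply, one_apply_eq, of_apply, cons_val', cons_val_one,
      cons_val_fin_one]
    ring
  have hA₂ : A₂.det = -A₄.det * (ψ + ((β - 1) / lam) * ψx - 1) := by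
    rw [← hB]
    exact det_bindingRegimeMatrix_add_mul_col_one (K := K) β (lam * σ) rfl rfl _
  refine ⟨hA₂, fun hψ hA₄ => ?_⟩
  have hpos : 0 < A₄.det * A₄.det * (ψ + ((β - 1) / lam) * ψx - 1) :=
    mul_pos (mul_self_pos.mpr hA₄) (sub_pos.mpr hψ)
  rw [hA₂]
  linarith

/-- With an absorbing state (`q = 1`), the determinant of the (ZIR,PIR)
regime matrix `A₂` satisfies `det A₂ = −det A₄ · (ψ + ((β−1)/λ)ψ_x − 1)`;
hence under the Taylor principle `ψ + ((β−1)/λ)ψ_x > 1` and `det A₄ ≠ 0`,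
the determinants `det A₂` and `det A₄` have strictly opposite signs, so the
coherency condition fails. -/
theorem nk_absorbing_det_identity (p β σ lam ψ ψx : ℝ) (hlam : lam ≠ 0) :
    (let K : Matrix (Fin 2) (Fin 2) ℝ := !![p, 1 - p; 0, 1]
     let Q : Matrix (Fin 2) (Fin 2) ℝ := 1 - K - β • ((1 - K) * K) - (lam * σ) • K
     let A₂ : Matrix (Fin 2) (Fin 2) ℝ :=
       Q + (lam * σ) • ((ψ • (1 : Matrix (Fin 2) (Fin 2) ℝ)
            - (ψx / lam) • ((1 : Matrix (Fin 2) (Fin 2) ℝ) - β • K)) * !![(0:ℝ), 0; 0, 1])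
     let A₄ : Matrix (Fin 2) (Fin 2) ℝ := Q
     A₂.det = -A₄.det * (ψ + ((β - 1) / lam) * ψx - 1) ∧
     (1 < ψ + ((β - 1) / lam) * ψx → A₄.det ≠ 0 → A₂.det * A₄.det < 0)) :=
  nk_absorbing_det_identity_general p β σ lam ψ ψx
end

section
/- Let γ > 0, λ > 0, σ > 0, β ∈ (0,1), p, q ∈ [0,1]. Define K := [[p, 1−p],[1−q, q]], Q := I₂ − K − β(I₂ − K)K − λσK, e₁ := (1,0)ᵀ, e₂ := (0,1)ᵀ, and B₁ := (1 + λ²/γ)I₂ − βK, B₂ := I₂ − βK − e₁e₁ᵀ(K(I₂ − βK) + λσK) + (λ²/γ)e₂e₂ᵀ, B₃ := I₂ − βK − e₂e₂ᵀ(K(I₂ − βK) + λσK) + (λ²/γ)e₁e₁ᵀ, B₄ := Q. Then det B₁ > 0, and either det B₄ ≤ 0 or (det B₂ < 0 and det B₃ < 0). In particular, the four determinants det B₁,…,det B₄ never all share the same strict sign, so the New Keynesian model under optimal discretionary monetary policy is not generically coherent. -/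
/-!
`K` is stochastic, so it has eigenvalues `1` and `s = p + q - 1`, and `B₁`, `B₄` are polynomials
in `K`: `det B₁ = (1 + λ²/γ - β)(1 + λ²/γ - βs) > 0` and `det B₄ = λσ (λσ s - (1 - s)(1 - βs))`.
If `det B₄ > 0`, then `(1 - s)(1 - βs) < λσ s`; since `s ≤ p` and `x ↦ (1 - x)(1 - βs) - λσ x` is
decreasing, the `(1,1)` entry of `B₂` is then negative; the off-diagonal entries of `B₂` are
`≤ 0` and `(B₂)₂₂ > 0`, so `det B₂ < 0`. Symmetrically (`s ≤ q`) `det B₃ < 0`.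
-/

open Matrix

section

def markovMatrix (p q : ℝ) : Matrix (Fin 2) (Fin 2) ℝ := !![p, 1 - p; 1 - q, q]

variable (β a L p q : ℝ)

theorem det_B₁_eq :
    (L • (1 : Matrix (Fin 2) (Fin 2) ℝ) - β • markovMatrix p q).det =
      (L - β) * (L - β * (p + q - 1)) := by
  simp [markovMatrix, det_fin_two, one_fin_two]
  ring

theorem det_B₂_eq :
    (1 - β • markovMatrix p q
        - !![1, 0; 0, 0] * (markovMatrix p q * (1 - β • markovMatrix p q) + a • markovMatrix p q)
        + L • !![0, 0; 0, 1]).det =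
      ((1 - p) * (1 - β * (p + q - 1)) - a * p) * (1 - β * q + L)
        - β * (1 - q) * ((1 - p) * (1 + a - β * (p + q - 1))) := by
  simp [markovMatrix, det_fin_two, one_fin_two]
  ring

theorem det_B₃_eq :
    (1 - β • markovMatrix p q
        - !![0, 0; 0, 1] * (markovMatrix p q * (1 - β • markovMatrix p q) + a • markovMatrix p q)
        + L • !![1, 0; 0, 0]).det =
      ((1 - q) * (1 - β * (p + q - 1)) - a * q) * (1 - β * p + L)
        - β * (1 - p) * ((1 - q) * (1 + a - β * (p + q - 1))) := by
  simp [markovMatrix, det_fin_two, one_fin_two]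
  ring

theorem det_B₄_eq :
    (1 - markovMatrix p q - β • ((1 - markovMatrix p q) * markovMatrix p q)
        - a • markovMatrix p q).det =
      a * (a * (p + q - 1) - (1 - (p + q - 1)) * (1 - β * (p + q - 1))) := by
  simp [markovMatrix, det_fin_two, one_fin_two]
  ring

variable {β a L p q}

theorem mixed_regime_det_neg {s : ℝ} (hβ : β ∈ Set.Icc (0 : ℝ) 1) (ha : 0 ≤ a) (hL : 0 < L)
    (hp : p ≤ 1) (hq : q ∈ Set.Icc (0 : ℝ) 1) (hsp : s ≤ p)
    (hroot : (1 - s) * (1 - β * s) < a * s) :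
    ((1 - p) * (1 - β * s) - a * p) * (1 - β * q + L)
      - β * (1 - q) * ((1 - p) * (1 + a - β * s)) < 0 := by
  obtain ⟨hβ0, hβ1⟩ := hβ
  obtain ⟨hq0, hq1⟩ := hq
  have hβs : β * s ≤ 1 := by nlinarith
  have hdecr : (1 - p) * (1 - β * s) - a * p ≤ (1 - s) * (1 - β * s) - a * s := by nlinarith
  have hfactor : 0 < 1 - β * q + L := by nlinarith
  have hrest : 0 ≤ β * (1 - q) * ((1 - p) * (1 + a - β * s)) := by
    have : 0 ≤ 1 + a - β * s := by linarith
    have : 0 ≤ 1 - q := by linarith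
    have : 0 ≤ 1 - p := by linarith
    positivity
  nlinarith [mul_neg_of_neg_of_pos (by linarith : (1 - p) * (1 - β * s) - a * p < 0) hfactor]

end

/-- The New Keynesian model under optimal discretionary policy is not
generically coherent: among the four regime-configuration matrices
`B₁, B₂, B₃, B₄`, one has `det B₁ > 0` while either `det B₄ ≤ 0` or both
`det B₂ < 0` and `det B₃ < 0`; in particular the four determinants never all
share the same strict sign. -/
theorem nk_optimal_policy_not_coherent (γ lam σ β p q : ℝ)
    (hγ : 0 < γ) (hlam : 0 < lam) (hσ : 0 < σ) (hβ : β ∈ Set.Ioo (0:ℝ) 1)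
    (hp : p ∈ Set.Icc (0:ℝ) 1) (hq : q ∈ Set.Icc (0:ℝ) 1) :
    (let K : Matrix (Fin 2) (Fin 2) ℝ := !![p, 1 - p; 1 - q, q]
     let Q : Matrix (Fin 2) (Fin 2) ℝ := 1 - K - β • ((1 - K) * K) - (lam * σ) • K
     let E₁ : Matrix (Fin 2) (Fin 2) ℝ := !![1, 0; 0, 0]
     let E₂ : Matrix (Fin 2) (Fin 2) ℝ := !![0, 0; 0, 1]
     let B₁ : Matrix (Fin 2) (Fin 2) ℝ :=
       (1 + lam ^ 2 / γ) • (1 : Matrix (Fin 2) (Fin 2) ℝ) - β • K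
     let B₂ : Matrix (Fin 2) (Fin 2) ℝ :=
       1 - β • K - E₁ * (K * (1 - β • K) + (lam * σ) • K) + (lam ^ 2 / γ) • E₂
     let B₃ : Matrix (Fin 2) (Fin 2) ℝ :=
       1 - β • K - E₂ * (K * (1 - β • K) + (lam * σ) • K) + (lam ^ 2 / γ) • E₁
     let B₄ : Matrix (Fin 2) (Fin 2) ℝ := Q
     0 < B₁.det ∧ (B₄.det ≤ 0 ∨ (B₂.det < 0 ∧ B₃.det < 0)) ∧
     ¬ ((0 < B₁.det ∧ 0 < B₂.det ∧ 0 < B₃.det ∧ 0 < B₄.det) ∨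
        (B₁.det < 0 ∧ B₂.det < 0 ∧ B₃.det < 0 ∧ B₄.det < 0))) := by
  intro K Q E₁ E₂ B₁ B₂ B₃ B₄
  obtain ⟨hβ0, hβ1⟩ := hβ
  obtain ⟨hp0, hp1⟩ := hp
  have hL : 0 < lam ^ 2 / γ := by positivity
  have ha : 0 < lam * σ := mul_pos hlam hσ
  have hB₁ : 0 < B₁.det := by
    rw [show B₁.det = _ from det_B₁_eq β (1 + lam ^ 2 / γ) p q]
    exact mul_pos (by linarith) (by nlinarith [hq.2])
  have hB₂₃ : B₄.det ≤ 0 ∨ (B₂.det < 0 ∧ B₃.det < 0) := by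
    refine or_iff_not_imp_left.2 fun hB₄ => ?_
    rw [show B₄.det = _ from det_B₄_eq β (lam * σ) p q, not_le] at hB₄
    have hroot := sub_pos.1 (pos_of_mul_pos_right hB₄ ha.le)
    have hβ' : β ∈ Set.Icc (0 : ℝ) 1 := ⟨hβ0.le, hβ1.le⟩
    rw [show B₂.det = _ from det_B₂_eq β (lam * σ) (lam ^ 2 / γ) p q,
      show B₃.det = _ from det_B₃_eq β (lam * σ) (lam ^ 2 / γ) p q]
    exact ⟨mixed_regime_det_neg hβ' ha.le hL hp1 hq (by linarith [hq.2]) hroot,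
      mixed_regime_det_neg hβ' ha.le hL hq.2 ⟨hp0, hp1⟩ (by linarith) hroot⟩
  refine ⟨hB₁, hB₂₃, ?_⟩
  rintro (⟨-, hB₂, -, hB₄⟩ | ⟨hB₁', -⟩)
  · rcases hB₂₃ with h | ⟨h, -⟩ <;> linarith
  · linarith
end

section
/- Let β ∈ (0,1), σ > 0, λ > 0, ψ > 1, p ∈ (0,1), μ ∈ ℝ, and r^L < 0. Set θ := (1−p)(1−pβ)/(pσλ), K := [[p, 1−p],[0, 1]], and ε := (σ p r^L, 0)ᵀ. Call a pair (π̂, x̂) ∈ ℝ² × ℝ² an MSV solution if, with R̂ := max{−μ(1,1)ᵀ, ψπ̂} taken componentwise, it satisfies π̂ = βKπ̂ + λx̂ and x̂ = Kx̂ − σ(R̂ − Kπ̂) + ε. Then an MSV solution exists if and only if either (θ > 1 and μ ≥ 0) or (θ ≤ 1 and μ ≥ 0 and −r^L ≤ μ((ψ−p)/(ψp) + θ/ψ)). -/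
/-!
In the absorbing state the Taylor rule must have a fixed point, which forces `μ ≥ 0` and
inflation `0` or `-μ` there. Eliminating output, the transitory state reduces to one scalar
equation `impliedShock p θ μ ψ π_L = r^L + ((1 - p) / p + θ) π_N` in transitory inflation `π_L`.
Its left side is piecewise linear with a kink at `-μ / ψ`, where the lower bound starts to bind,
and increasing to the right of the kink; to the left it has slope `θ - 1`. So it is onto `ℝ`
when `θ > 1`, and onto the half-line above its kink value `-μ ((ψ - p) / (ψ p) + θ / ψ)` when
`θ ≤ 1`. As `π_N ≤ 0`, the choice `π_N = 0` is the most permissive one.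
-/

open Matrix

/-- The demand shock `r^L` for which transitory inflation `y` solves the model when the absorbing
state sits at the inflation target. -/
noncomputable def impliedShock (p θ μ ψ y : ℝ) : ℝ := max (-μ) (ψ * y) / p + (θ - 1) * y

theorem max_neg_mul_eq_self_iff {μ ψ y : ℝ} (hψ : 1 < ψ) :
    max (-μ) (ψ * y) = y ↔ 0 ≤ μ ∧ (y = 0 ∨ y = -μ) := by
  constructor
  · intro h
    rcases max_cases (-μ) (ψ * y) with ⟨hmax, hle⟩ | ⟨hmax, hlt⟩
    · have hy : y = -μ := by linarith
      subst hy
      exact ⟨by nlinarith, Or.inr rfl⟩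
    · have hy : y = 0 := by nlinarith
      subst hy
      exact ⟨by linarith, Or.inl rfl⟩
  · rintro ⟨hμ, rfl | rfl⟩
    · simpa using hμ
    · exact max_eq_left (by nlinarith)

section impliedShock

variable {p θ μ ψ y : ℝ}

theorem impliedShock_of_kink_le (hψ : 0 < ψ) (hy : -μ / ψ ≤ y) :
    impliedShock p θ μ ψ y = (ψ / p + θ - 1) * y := by
  rw [impliedShock, max_eq_right ((div_le_iff₀' hψ).1 hy)]
  ring

theorem impliedShock_of_le_kink (hψ : 0 < ψ) (hy : y ≤ -μ / ψ) :
    impliedShock p θ μ ψ y = -μ / p + (θ - 1) * y := by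
  rw [impliedShock, max_eq_left ((le_div_iff₀' hψ).1 hy)]

theorem impliedShock_kink (hp : p ≠ 0) (hψ : ψ ≠ 0) :
    impliedShock p θ μ ψ (-μ / ψ) = -μ * ((ψ - p) / (ψ * p) + θ / ψ) := by
  rw [impliedShock, mul_div_cancel₀ _ hψ, max_self]
  field_simp
  ring

theorem impliedShock_kink_le (hp : 0 < p) (hpψ : p ≤ ψ) (hθ₀ : 0 ≤ θ) (hθ₁ : θ ≤ 1) (y : ℝ) :
    impliedShock p θ μ ψ (-μ / ψ) ≤ impliedShock p θ μ ψ y := by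
  have hψ : 0 < ψ := hp.trans_le hpψ
  rcases le_total y (-μ / ψ) with hy | hy
  · rw [impliedShock_of_le_kink hψ le_rfl, impliedShock_of_le_kink hψ hy]
    nlinarith
  · have hslope : 0 ≤ ψ / p + θ - 1 := by linarith [(one_le_div hp).2 hpψ]
    rw [impliedShock_of_kink_le hψ le_rfl, impliedShock_of_kink_le hψ hy]
    exact mul_le_mul_of_nonneg_left hy hslope

theorem exists_impliedShock_eq_of_kink_le (hp : 0 < p) (hpψ : p < ψ) (hθ : 0 ≤ θ) {t : ℝ}
    (ht : impliedShock p θ μ ψ (-μ / ψ) ≤ t) : ∃ y, impliedShock p θ μ ψ y = t := by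
  have hψ : 0 < ψ := hp.trans hpψ
  have hslope : 0 < ψ / p + θ - 1 := by linarith [(one_lt_div hp).2 hpψ]
  rw [impliedShock_of_kink_le hψ le_rfl] at ht
  have hy : -μ / ψ ≤ t / (ψ / p + θ - 1) := (le_div_iff₀' hslope).2 ht
  exact ⟨_, by rw [impliedShock_of_kink_le hψ hy, mul_div_cancel₀ _ hslope.ne']⟩

theorem exists_impliedShock_eq_of_one_lt (hp : 0 < p) (hpψ : p < ψ) (hθ : 1 < θ) (t : ℝ) :
    ∃ y, impliedShock p θ μ ψ y = t := by
  have hψ : 0 < ψ := hp.trans hpψ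
  rcases le_or_gt (impliedShock p θ μ ψ (-μ / ψ)) t with ht | ht
  · exact exists_impliedShock_eq_of_kink_le hp hpψ (by linarith) ht
  have hslope : 0 < θ - 1 := by linarith
  rw [impliedShock_of_le_kink hψ le_rfl] at ht
  have hy : (t + μ / p) / (θ - 1) ≤ -μ / ψ := by
    rw [div_le_iff₀ hslope]
    linarith [neg_div p μ]
  refine ⟨(t + μ / p) / (θ - 1), ?_⟩
  rw [impliedShock_of_le_kink hψ hy, mul_div_cancel₀ _ hslope.ne', neg_div]
  ring

end impliedShock

theorem msv_equations_iff {β σ lam ψ p μ rL : ℝ} (hσ : σ ≠ 0) (hlam : lam ≠ 0) (hp : p ≠ 0)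
    (P X : Fin 2 → ℝ) :
    ((∀ i, P i = β * (!![p, 1 - p; 0, 1] *ᵥ P) i + lam * X i) ∧
      (∀ i, X i = (!![p, 1 - p; 0, 1] *ᵥ X) i
        - σ * (max (-μ) (ψ * P i) - (!![p, 1 - p; 0, 1] *ᵥ P) i) + ![σ * p * rL, 0] i)) ↔
    max (-μ) (ψ * P 1) = P 1 ∧ lam * X 1 = (1 - β) * P 1 ∧
      lam * X 0 = (1 - p * β) * P 0 - β * (1 - p) * P 1 ∧
      impliedShock p ((1 - p) * (1 - p * β) / (p * σ * lam)) μ ψ (P 0) =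
        rL + ((1 - p) / p + (1 - p) * (1 - p * β) / (p * σ * lam)) * P 1 := by
  simp only [mulVec, dotProduct, of_apply, cons_val', cons_val_fin_one, Fin.sum_univ_two,
    cons_val_zero, cons_val_one, Fin.forall_fin_two, zero_mul, one_mul, zero_add, add_zero]
  have hshock : impliedShock p ((1 - p) * (1 - p * β) / (p * σ * lam)) μ ψ (P 0) =
        rL + ((1 - p) / p + (1 - p) * (1 - p * β) / (p * σ * lam)) * P 1 ↔
      σ * lam * max (-μ) (ψ * P 0) = σ * lam * p * rL + (σ * lam * p - (1 - p) * (1 - p * β)) * P 0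
        + ((1 - p) * (1 - p * β) + σ * lam * (1 - p)) * P 1 := by
    rw [impliedShock]
    field_simp
    constructor <;> intro h <;> linear_combination h
  rw [hshock]
  constructor
  · rintro ⟨⟨e1a, e1b⟩, e2a, e2b⟩
    refine ⟨?_, ?_, ?_, ?_⟩
    · exact mul_left_cancel₀ hσ (by linear_combination e2b)
    · linear_combination -e1b
    · linear_combination -e1a
    · linear_combination lam * e2a + (1 - p) * e1a - (1 - p) * e1b
  · rintro ⟨hfix, hx1, hx0, hR⟩
    refine ⟨⟨by linear_combination -hx0, by linear_combination -hx1⟩, ?_, by linear_combination σ * hfix⟩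
    exact mul_left_cancel₀ hlam (by linear_combination (1 - p) * hx0 - (1 - p) * hx1 + hR)

theorem nk_taylor_msv_exists_iff_general (β σ lam ψ p μ rL : ℝ)
    (hβ : β ∈ Set.Ioo (0:ℝ) 1) (hσ : 0 < σ) (hlam : 0 < lam) (hψ : 1 < ψ)
    (hp : p ∈ Set.Ioo (0:ℝ) 1) :
    (let θ : ℝ := (1 - p) * (1 - p * β) / (p * σ * lam)
     let K : Matrix (Fin 2) (Fin 2) ℝ := !![p, 1 - p; 0, 1]
     let ε : Fin 2 → ℝ := ![σ * p * rL, 0]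
     (∃ pihat xhat : Fin 2 → ℝ,
        (∀ i, pihat i = β * (K.mulVec pihat) i + lam * xhat i) ∧
        (∀ i, xhat i = (K.mulVec xhat) i
            - σ * (max (-μ) (ψ * pihat i) - (K.mulVec pihat) i) + ε i))
       ↔ ((1 < θ ∧ 0 ≤ μ) ∨
          (θ ≤ 1 ∧ 0 ≤ μ ∧ -rL ≤ μ * ((ψ - p) / (ψ * p) + θ / ψ)))) := by
  intro θ K ε
  obtain ⟨hp₀, hp₁⟩ := hp
  have hθ : 0 ≤ θ := by
    have : p * β < 1 := by nlinarith [hβ.2]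
    exact div_nonneg (mul_nonneg (by linarith) (by linarith)) (by positivity)
  have hpψ : p < ψ := hp₁.trans hψ
  have hkink : impliedShock p θ μ ψ (-μ / ψ) = -μ * ((ψ - p) / (ψ * p) + θ / ψ) :=
    impliedShock_kink hp₀.ne' (by positivity)
  have hmsv := msv_equations_iff (β := β) (μ := μ) (ψ := ψ) (rL := rL) hσ.ne' hlam.ne' hp₀.ne'
  constructor
  · rintro ⟨P, X, hP, hX⟩
    obtain ⟨hfix, -, -, hshock⟩ := (hmsv P X).1 ⟨hP, hX⟩
    obtain ⟨hμ, hP₁⟩ := (max_neg_mul_eq_self_iff hψ).1 hfix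
    have hle : impliedShock p θ μ ψ (P 0) ≤ rL := by
      have hc : 0 ≤ (1 - p) / p + θ := add_nonneg (div_nonneg (by linarith) hp₀.le) hθ
      rw [hshock, add_le_iff_nonpos_right]
      exact mul_nonpos_of_nonneg_of_nonpos hc (by rcases hP₁ with h | h <;> linarith)
    rcases lt_or_ge 1 θ with hθ₁ | hθ₁
    · exact Or.inl ⟨hθ₁, hμ⟩
    · refine Or.inr ⟨hθ₁, hμ, ?_⟩
      linarith [impliedShock_kink_le (μ := μ) hp₀ hpψ.le hθ hθ₁ (P 0)]
  · intro h
    have hμ : 0 ≤ μ := by rcases h with ⟨-, hμ⟩ | ⟨-, hμ, -⟩ <;> exact hμ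
    obtain ⟨y, hy⟩ : ∃ y, impliedShock p θ μ ψ y = rL := by
      rcases h with ⟨hθ₁, -⟩ | ⟨-, -, hr⟩
      · exact exists_impliedShock_eq_of_one_lt hp₀ hpψ hθ₁ rL
      · exact exists_impliedShock_eq_of_kink_le hp₀ hpψ hθ (by linarith)
    refine ⟨![y, 0], ![(1 - p * β) * y / lam, 0], (hmsv _ _).2 ⟨?_, ?_, ?_, ?_⟩⟩
    · simpa using hμ
    · simp
    · simp [mul_div_cancel₀ _ hlam.ne']
    · simpa using hy

/-- Existence of a minimum state variable solution in the three-equation New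
Keynesian model with an active Taylor rule and a two-state (transitory/absorbing)
discount factor shock: an MSV solution exists iff either (`θ > 1` and `μ ≥ 0`)
or (`θ ≤ 1`, `μ ≥ 0` and `−r^L ≤ μ((ψ−p)/(ψp) + θ/ψ)`). -/
theorem nk_taylor_msv_exists_iff (β σ lam ψ p μ rL : ℝ)
    (hβ : β ∈ Set.Ioo (0:ℝ) 1) (hσ : 0 < σ) (hlam : 0 < lam) (hψ : 1 < ψ)
    (hp : p ∈ Set.Ioo (0:ℝ) 1) (hrL : rL < 0) :
    (let θ : ℝ := (1 - p) * (1 - p * β) / (p * σ * lam)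
     let K : Matrix (Fin 2) (Fin 2) ℝ := !![p, 1 - p; 0, 1]
     let ε : Fin 2 → ℝ := ![σ * p * rL, 0]
     (∃ pihat xhat : Fin 2 → ℝ,
        (∀ i, pihat i = β * (K.mulVec pihat) i + lam * xhat i) ∧
        (∀ i, xhat i = (K.mulVec xhat) i
            - σ * (max (-μ) (ψ * pihat i) - (K.mulVec pihat) i) + ε i))
       ↔ ((1 < θ ∧ 0 ≤ μ) ∨
          (θ ≤ 1 ∧ 0 ≤ μ ∧ -rL ≤ μ * ((ψ - p) / (ψ * p) + θ / ψ)))) :=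
  nk_taylor_msv_exists_iff_general β σ lam ψ p μ rL hβ hσ hlam hψ hp
end

section
/- Let β ∈ (0,1), σ > 0, λ > 0, γ > 0, p ∈ (0,1), μ ∈ ℝ, and r^L < 0. Set θ := (1−p)(1−pβ)/(pσλ), K := [[p, 1−p],[0, 1]], and ε := (σ p r^L, 0)ᵀ. Call a triple (π̂, x̂, R̂) ∈ ℝ² × ℝ² × ℝ² an MSV solution under optimal discretionary policy if π̂ = βKπ̂ + λx̂, x̂ = Kx̂ − σ(R̂ − Kπ̂) + ε, and for each state i ∈ {1,2} either (R̂_i > −μ and γx̂_i + λπ̂_i = 0) or (R̂_i = −μ and γx̂_i + λπ̂_i ≤ 0). Then an MSV solution exists if and only if either (θ > 1 and μ ≥ 0) or (θ ≤ 1 and μ ≥ 0 and −r^L ≤ μ/p). -/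
/-!
In the absorbing state the Euler equation forces `R₁ = π₁`, and since `γ(1 - β) + λ² > 0` the
targeting rule leaves only `π₁ = 0` with the bound slack (so `μ > 0`) or `π₁ = R₁ = -μ` (so
`μ ≥ 0`); in both cases `π₁ ≤ 0`. The Phillips curve in the two states gives
`λ(x₀ - x₁) = (1 - pβ)(π₀ - π₁)`, which turns the Euler equation into
`p(1 - θ)(π₀ - π₁) = R₀ - π₁ - p r^L`, and the targeting rule forces `π₀ ≤ 0`.
If `θ ≤ 1` and `μ + p r^L < 0`, the right-hand side exceeds `-π₁ ≥ 0`, so `π₀ > π₁` and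
`p(π₀ - π₁) > -π₁`, which contradicts `π₀ ≤ 0`. Conversely, zero inflation with `R₀ = p r^L` is a
solution when `μ + p r^L ≥ 0`; otherwise `θ > 1` and the bound binds in the transitory state,
with `π₀ = (μ + p r^L) / (p(θ - 1)) < 0`.
-/

open Matrix

namespace NewKeynesian

variable {β σ lam γ p μ rL : ℝ}

noncomputable def theta (β σ lam p : ℝ) : ℝ := (1 - p) * (1 - p * β) / (p * σ * lam)

lemma theta_nonneg (hβ : β ≤ 1) (hσ : 0 < σ) (hlam : 0 < lam) (hp₀ : 0 < p) (hp₁ : p ≤ 1) :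
    0 ≤ theta β σ lam p := by
  have : p * β ≤ 1 := by nlinarith
  unfold theta
  exact div_nonneg (mul_nonneg (by linarith) (by linarith)) (by positivity)

lemma mul_theta (hσ : σ ≠ 0) (hlam : lam ≠ 0) (hp : p ≠ 0) :
    p * σ * lam * theta β σ lam p = (1 - p) * (1 - p * β) := by
  unfold theta
  field_simp

def transition (p : ℝ) : Matrix (Fin 2) (Fin 2) ℝ := !![p, 1 - p; 0, 1]

lemma mulVec_transition_zero (v : Fin 2 → ℝ) :
    (transition p *ᵥ v) 0 = p * v 0 + (1 - p) * v 1 := by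
  simp [transition, mulVec, dotProduct, Fin.sum_univ_two]

lemma mulVec_transition_one (v : Fin 2 → ℝ) : (transition p *ᵥ v) 1 = v 1 := by
  simp [transition, mulVec, dotProduct, Fin.sum_univ_two]

def TargetingRule (γ lam μ π x R : ℝ) : Prop :=
  (-μ < R ∧ γ * x + lam * π = 0) ∨ (R = -μ ∧ γ * x + lam * π ≤ 0)

def IsMSVSolution (β σ lam γ p μ rL : ℝ) (π x R : Fin 2 → ℝ) : Prop :=
  (∀ i, π i = β * (transition p *ᵥ π) i + lam * x i) ∧
  (∀ i, x i = (transition p *ᵥ x) i - σ * (R i - (transition p *ᵥ π) i) + ![σ * p * rL, 0] i) ∧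
  ∀ i, TargetingRule γ lam μ (π i) (x i) (R i)

lemma isMSVSolution_iff (hσ : σ ≠ 0) (hlam : lam ≠ 0) (hp : p ≠ 0) {π x R : Fin 2 → ℝ} :
    IsMSVSolution β σ lam γ p μ rL π x R ↔
      R 1 = π 1 ∧ lam * x 1 = (1 - β) * π 1 ∧
      lam * x 0 = (1 - p * β) * π 0 - β * (1 - p) * π 1 ∧
      p * (1 - theta β σ lam p) * (π 0 - π 1) = R 0 - π 1 - p * rL ∧
      TargetingRule γ lam μ (π 0) (x 0) (R 0) ∧ TargetingRule γ lam μ (π 1) (x 1) (R 1) := by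
  have hθ := mul_theta (β := β) hσ hlam hp
  simp only [IsMSVSolution, Fin.forall_fin_two, mulVec_transition_zero, mulVec_transition_one,
    cons_val_zero, cons_val_one]
  constructor
  · rintro ⟨⟨e₀, e₁⟩, ⟨f₀, f₁⟩, r₀, r₁⟩
    have hR : R 1 = π 1 := by
      have : σ * (R 1 - π 1) = 0 := by linarith
      linarith [(mul_eq_zero.1 this).resolve_left hσ]
    refine ⟨hR, by linear_combination -e₁, by linear_combination -e₀, ?_, r₀, r₁⟩
    apply mul_left_cancel₀ (mul_ne_zero hσ hlam)
    linear_combination -lam * f₀ - (π 0 - π 1) * hθ - (1 - p) * (e₀ - e₁)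
  · rintro ⟨hR, h₁, h₀, hE, r₀, r₁⟩
    refine ⟨⟨by linear_combination -h₀, by linear_combination -h₁⟩, ⟨?_, by rw [hR]; ring⟩, r₀, r₁⟩
    apply mul_left_cancel₀ hlam
    linear_combination -σ * lam * hE - (π 0 - π 1) * hθ + (1 - p) * (h₀ - h₁)

lemma TargetingRule.neg_le {π x R : ℝ} (h : TargetingRule γ lam μ π x R) : -μ ≤ R := by
  rcases h with ⟨hR, -⟩ | ⟨hR, -⟩ <;> linarith

lemma TargetingRule.target_nonpos {π x R : ℝ} (h : TargetingRule γ lam μ π x R) :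
    γ * x + lam * π ≤ 0 := by
  rcases h with ⟨-, ht⟩ | ⟨-, ht⟩ <;> linarith

lemma targetingRule_of_target_eq_zero {π x R : ℝ} (hR : -μ ≤ R) (ht : γ * x + lam * π = 0) :
    TargetingRule γ lam μ π x R := by
  rcases hR.lt_or_eq with hR | hR
  · exact Or.inl ⟨hR, ht⟩
  · exact Or.inr ⟨hR.symm, ht.le⟩

lemma nonpos_of_target_nonpos {a c π x : ℝ} (hγ : 0 ≤ γ) (hlam : 0 < lam) (ha : 0 ≤ a)
    (hc : 0 ≤ c) (hx : lam * x = a * π + c) (ht : γ * x + lam * π ≤ 0) : π ≤ 0 := by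
  have key : (γ * a + lam ^ 2) * π + γ * c = lam * (γ * x + lam * π) := by
    linear_combination -γ * hx
  have : (γ * a + lam ^ 2) * π ≤ 0 := by
    nlinarith [mul_nonpos_of_nonneg_of_nonpos hlam.le ht, mul_nonneg hγ hc]
  exact nonpos_of_mul_nonpos_right this (by positivity)

lemma nonneg_of_targetingRule_absorbing {π x : ℝ} (hβ : β ≤ 1) (hγ : 0 ≤ γ) (hlam : 0 < lam)
    (hx : lam * x = (1 - β) * π) (h : TargetingRule γ lam μ π x π) : 0 ≤ μ := by
  rcases h with ⟨hR, ht⟩ | ⟨hR, ht⟩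
  · have : (γ * (1 - β) + lam ^ 2) * π = 0 := by linear_combination -γ * hx + lam * ht
    have hπ : π = 0 := (mul_eq_zero.1 this).resolve_left (by nlinarith)
    linarith
  · have := nonpos_of_target_nonpos (a := 1 - β) hγ hlam (by linarith) le_rfl
      (by rw [add_zero]; exact hx) ht
    linarith

lemma add_mul_nonneg_of_theta_le_one {θ π₀ π₁ R₀ : ℝ} (hp₀ : 0 < p) (hp₁ : p ≤ 1)
    (hθ₀ : 0 ≤ θ) (hθ₁ : θ ≤ 1) (hπ₀ : π₀ ≤ 0) (hπ₁ : π₁ ≤ 0) (hR : -μ ≤ R₀)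
    (h : p * (1 - θ) * (π₀ - π₁) = R₀ - π₁ - p * rL) : 0 ≤ μ + p * rL := by
  by_contra! hneg
  have hgap : -π₁ < p * (1 - θ) * (π₀ - π₁) := by linarith
  have hu : 0 < π₀ - π₁ := by
    by_contra! hu
    nlinarith [mul_nonneg (mul_nonneg hp₀.le (sub_nonneg.2 hθ₁)) (neg_nonneg.2 hu)]
  have hθu : p * (1 - θ) * (π₀ - π₁) ≤ p * (π₀ - π₁) := by
    nlinarith [mul_nonneg (mul_nonneg hp₀.le hθ₀) hu.le]
  nlinarith [mul_nonpos_of_nonneg_of_nonpos hp₀.le hπ₀,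
    mul_nonneg (sub_nonneg.2 hp₁) (neg_nonneg.2 hπ₁)]

lemma isMSVSolution_zero (hσ : σ ≠ 0) (hlam : lam ≠ 0) (hp : p ≠ 0) (hμ : 0 ≤ μ)
    (h : 0 ≤ μ + p * rL) : IsMSVSolution β σ lam γ p μ rL 0 0 ![p * rL, 0] := by
  rw [isMSVSolution_iff hσ hlam hp]
  simp only [Fin.isValue, cons_val_one, cons_val_fin_one, Pi.zero_apply, mul_zero, sub_self,
    cons_val_zero, sub_zero, true_and]
  exact ⟨targetingRule_of_target_eq_zero (by linarith) (by ring),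
    targetingRule_of_target_eq_zero (by linarith) (by ring)⟩

lemma isMSVSolution_of_transitory_zlb {π₀ : ℝ} (hσ : σ ≠ 0) (hlam : 0 < lam) (hp : p ≠ 0)
    (hγ : 0 ≤ γ) (hpβ : p * β ≤ 1) (hμ : 0 ≤ μ) (hπ₀ : π₀ ≤ 0)
    (h : p * (1 - theta β σ lam p) * π₀ = -μ - p * rL) :
    IsMSVSolution β σ lam γ p μ rL ![π₀, 0] ![(1 - p * β) / lam * π₀, 0] ![-μ, 0] := by
  rw [isMSVSolution_iff hσ hlam.ne' hp]
  simp only [Fin.isValue, cons_val_one, cons_val_fin_one, mul_zero, cons_val_zero, sub_zero,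
    true_and]
  refine ⟨by field_simp, h, Or.inr ⟨rfl, ?_⟩,
    targetingRule_of_target_eq_zero (by linarith) (by ring)⟩
  calc γ * ((1 - p * β) / lam * π₀) + lam * π₀ = (γ * (1 - p * β) / lam + lam) * π₀ := by ring
    _ ≤ 0 := mul_nonpos_of_nonneg_of_nonpos (by have := sub_nonneg.2 hpβ; positivity) hπ₀

theorem exists_isMSVSolution_iff (hβ : β ∈ Set.Ioo (0:ℝ) 1) (hσ : 0 < σ) (hlam : 0 < lam)
    (hγ : 0 ≤ γ) (hp : p ∈ Set.Ioo (0:ℝ) 1) :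
    (∃ π x R, IsMSVSolution β σ lam γ p μ rL π x R) ↔
      0 ≤ μ ∧ (theta β σ lam p ≤ 1 → 0 ≤ μ + p * rL) := by
  have hpβ : p * β ≤ 1 := by nlinarith [hp.1, hp.2, hβ.1, hβ.2]
  constructor
  · rintro ⟨π, x, R, hsol⟩
    obtain ⟨hR, h₁, h₀, hE, r₀, r₁⟩ := (isMSVSolution_iff hσ.ne' hlam.ne' hp.1.ne').1 hsol
    have hμ : 0 ≤ μ := nonneg_of_targetingRule_absorbing hβ.2.le hγ hlam h₁ (hR ▸ r₁)
    have hπ₁ : π 1 ≤ 0 := nonpos_of_target_nonpos hγ hlam (sub_nonneg.2 hβ.2.le) le_rfl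
      (by rw [add_zero]; exact h₁) r₁.target_nonpos
    have hπ₀ : π 0 ≤ 0 := nonpos_of_target_nonpos hγ hlam (sub_nonneg.2 hpβ)
      (c := -(β * (1 - p) * π 1))
      (neg_nonneg.2 (mul_nonpos_of_nonneg_of_nonpos (mul_nonneg hβ.1.le (by linarith [hp.2])) hπ₁))
      (by rw [← sub_eq_add_neg]; exact h₀) r₀.target_nonpos
    exact ⟨hμ, fun hθ ↦ add_mul_nonneg_of_theta_le_one hp.1 hp.2.le
      (theta_nonneg hβ.2.le hσ hlam hp.1 hp.2.le) hθ hπ₀ hπ₁ r₀.neg_le hE⟩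
  · rintro ⟨hμ, hθ⟩
    rcases le_or_gt 0 (μ + p * rL) with h | h
    · exact ⟨_, _, _, isMSVSolution_zero hσ.ne' hlam.ne' hp.1.ne' hμ h⟩
    · have hθ₁ : 1 < theta β σ lam p := lt_of_not_ge (mt hθ h.not_ge)
      have hd : 0 < p * (theta β σ lam p - 1) := mul_pos hp.1 (by linarith)
      refine ⟨_, _, _, isMSVSolution_of_transitory_zlb
        (π₀ := (μ + p * rL) / (p * (theta β σ lam p - 1))) hσ.ne' hlam hp.1.ne' hγ hpβ hμ
        (div_nonpos_of_nonpos_of_nonneg h.le hd.le) ?_⟩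
      rw [show p * (1 - theta β σ lam p) = -(p * (theta β σ lam p - 1)) by ring, neg_mul,
        mul_div_cancel₀ _ hd.ne']
      ring

end NewKeynesian

open NewKeynesian in
theorem nk_optimal_msv_exists_iff_general (β σ lam γ p μ rL : ℝ)
    (hβ : β ∈ Set.Ioo (0:ℝ) 1) (hσ : 0 < σ) (hlam : 0 < lam) (hγ : 0 < γ)
    (hp : p ∈ Set.Ioo (0:ℝ) 1) :
    (let θ : ℝ := (1 - p) * (1 - p * β) / (p * σ * lam)
     let K : Matrix (Fin 2) (Fin 2) ℝ := !![p, 1 - p; 0, 1]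
     let ε : Fin 2 → ℝ := ![σ * p * rL, 0]
     (∃ pihat xhat Rhat : Fin 2 → ℝ,
        (∀ i, pihat i = β * (K.mulVec pihat) i + lam * xhat i) ∧
        (∀ i, xhat i = (K.mulVec xhat) i
            - σ * (Rhat i - (K.mulVec pihat) i) + ε i) ∧
        (∀ i, (-μ < Rhat i ∧ γ * xhat i + lam * pihat i = 0) ∨
              (Rhat i = -μ ∧ γ * xhat i + lam * pihat i ≤ 0)))
       ↔ ((1 < θ ∧ 0 ≤ μ) ∨ (θ ≤ 1 ∧ 0 ≤ μ ∧ -rL ≤ μ / p))) := by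
  intro θ K ε
  have hθ : θ = theta β σ lam p := rfl
  rw [hθ, le_div_iff₀ hp.1, neg_mul, neg_le_iff_add_nonneg, mul_comm rL]
  refine (exists_isMSVSolution_iff hβ hσ hlam hγ.le hp).trans ?_
  rcases le_or_gt (theta β σ lam p) 1 with h | h
  · have := not_lt.2 h
    tauto
  · have := not_le.2 h
    tauto

/-- Existence of a minimum state variable (Markov-perfect) solution in the New
Keynesian model under optimal discretionary policy with a two-state
(transitory/absorbing) discount factor shock: an MSV solution exists iff either
(`θ > 1` and `μ ≥ 0`) or (`θ ≤ 1`, `μ ≥ 0` and `−r^L ≤ μ/p`). -/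
theorem nk_optimal_msv_exists_iff (β σ lam γ p μ rL : ℝ)
    (hβ : β ∈ Set.Ioo (0:ℝ) 1) (hσ : 0 < σ) (hlam : 0 < lam) (hγ : 0 < γ)
    (hp : p ∈ Set.Ioo (0:ℝ) 1) (hrL : rL < 0) :
    (let θ : ℝ := (1 - p) * (1 - p * β) / (p * σ * lam)
     let K : Matrix (Fin 2) (Fin 2) ℝ := !![p, 1 - p; 0, 1]
     let ε : Fin 2 → ℝ := ![σ * p * rL, 0]
     (∃ pihat xhat Rhat : Fin 2 → ℝ,
        (∀ i, pihat i = β * (K.mulVec pihat) i + lam * xhat i) ∧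
        (∀ i, xhat i = (K.mulVec xhat) i
            - σ * (Rhat i - (K.mulVec pihat) i) + ε i) ∧
        (∀ i, (-μ < Rhat i ∧ γ * xhat i + lam * pihat i = 0) ∨
              (Rhat i = -μ ∧ γ * xhat i + lam * pihat i ≤ 0)))
       ↔ ((1 < θ ∧ 0 ≤ μ) ∨ (θ ≤ 1 ∧ 0 ≤ μ ∧ -rL ≤ μ / p))) :=
  nk_optimal_msv_exists_iff_general β σ lam γ p μ rL hβ hσ hlam hγ hp
end

section
/- Let p, q ∈ [0,1], β ∈ (0,1), σ > 0, λ > 0, ψ > 0. Define K := [[p, 1−p],[1−q, q]], Q := I₂ − K − β(I₂ − K)K − λσK, ψ* := p + q − 1 − (2 − p − q)(1 − (p + q − 1)β)/(σλ), e₁ := (1,0)ᵀ, e₂ := (0,1)ᵀ, and A₁ := Q + λσψ I₂, A₂ := Q + λσψ e₂e₂ᵀ, A₃ := Q + λσψ e₁e₁ᵀ, A₄ := Q. Then det A₁, det A₂, det A₃, det A₄ are all nonzero with the same sign if and only if either (ψ* < 0 and ψ* < ψ < 1) or (ψ* > 0 and ψ < ψ*). -/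
/-!
Write `c = λσ` and `κ = (c + 1 - (p + q - 1)β) / c`. Because `p + q - 1` is the second eigenvalue of
the stochastic matrix `K`, `Q` is `c` times a matrix depending only on `a = (1 - q)κ ≥ 0` and
`b = (1 - p)κ ≥ 0`, and `ψ* = 1 - a - b`. The four determinants are then `c²` times
`(ψ* - ψ)(1 - ψ)`, `ψ* - ψ(1 - b)`, `ψ* - ψ(1 - a)` and `ψ*`, whose signs are elementary to compare.
-/

open Matrix

namespace NKCoherency

/-- Since `(1 - K) * K = (p + q - 1) • (1 - K)`, `Q = (1 - (p + q - 1) * β) • (1 - K) - c • K`. -/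
lemma Q_eq_smul (p q β c : ℝ) (hc : c ≠ 0) :
    let K : Matrix (Fin 2) (Fin 2) ℝ := !![p, 1 - p; 1 - q, q]
    let κ := (c + (1 - (p + q - 1) * β)) / c
    1 - K - β • ((1 - K) * K) - c • K =
      c • !![(1 - p) * κ - 1, -((1 - p) * κ); -((1 - q) * κ), (1 - q) * κ - 1] := by
  intro K κ
  ext i j
  fin_cases i <;> fin_cases j <;> simp [K, κ, mul_apply, Fin.sum_univ_two] <;> field_simp <;> ring

lemma det_smul_fin_two_of (c a b : ℝ) :
    (c • !![b - 1, -b; -a, a - 1]).det = c ^ 2 * (1 - a - b) := by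
  rw [det_smul, det_fin_two_of, Fintype.card_fin]
  ring

lemma det_smul_fin_two_of_add_smul_diag (c t a b u v : ℝ) :
    (c • !![b - 1, -b; -a, a - 1] + (c * t) • !![u, 0; 0, v]).det =
      c ^ 2 * (1 - a - b + t * (u * (a - 1) + v * (b - 1)) + t ^ 2 * u * v) := by
  simp only [smul_of, smul_cons, smul_eq_mul, smul_empty, of_add_of, add_cons, head_cons, tail_cons,
    empty_add_empty, det_fin_two_of]
  ring

section Signs

variable {s a b ψ : ℝ}

lemma all_pos_iff (ha : 0 ≤ a) (hb : 0 ≤ b) (hs : s = 1 - a - b) (hψ : 0 < ψ) :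
    (0 < (s - ψ) * (1 - ψ) ∧ 0 < s - ψ * (1 - b) ∧ 0 < s - ψ * (1 - a) ∧ 0 < s) ↔
      0 < s ∧ ψ < s := by
  constructor
  · rintro ⟨h₁, h₂, -, hs₀⟩
    have hψ₁ : 0 < 1 - ψ := by
      by_contra! h
      nlinarith
    exact ⟨hs₀, by linarith [pos_of_mul_pos_left h₁ hψ₁.le]⟩
  · rintro ⟨hs₀, hψs⟩
    refine ⟨mul_pos (by linarith) (by linarith), ?_, ?_, hs₀⟩ <;> nlinarith

lemma all_neg_iff (ha : 0 ≤ a) (hb : 0 ≤ b) (hs : s = 1 - a - b) (hψ : 0 < ψ) :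
    ((s - ψ) * (1 - ψ) < 0 ∧ s - ψ * (1 - b) < 0 ∧ s - ψ * (1 - a) < 0 ∧ s < 0) ↔
      s < 0 ∧ s < ψ ∧ ψ < 1 := by
  constructor
  · rintro ⟨h₁, -, -, hs₀⟩
    exact ⟨hs₀, by linarith, by nlinarith⟩
  · rintro ⟨hs₀, -, hψ₁⟩
    refine ⟨mul_neg_of_neg_of_pos (by linarith) (by linarith), ?_, ?_, hs₀⟩ <;> nlinarith

end Signs

end NKCoherency

open NKCoherency in
/-- Coherency and completeness condition for the New Keynesian model with
Taylor rule coefficient `ψ` and a two-state Markov demand shock: the four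
regime-configuration determinants are all nonzero with the same sign iff
either (`ψ* < 0` and `ψ* < ψ < 1`) or (`ψ* > 0` and `ψ < ψ*`). -/
theorem nk_cc_condition_iff (p q β σ lam ψ : ℝ)
    (hp : p ∈ Set.Icc (0:ℝ) 1) (hq : q ∈ Set.Icc (0:ℝ) 1)
    (hβ : β ∈ Set.Ioo (0:ℝ) 1) (hσ : 0 < σ) (hlam : 0 < lam) (hψ : 0 < ψ) :
    (let K : Matrix (Fin 2) (Fin 2) ℝ := !![p, 1 - p; 1 - q, q]
     let Q : Matrix (Fin 2) (Fin 2) ℝ := 1 - K - β • ((1 - K) * K) - (lam * σ) • K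
     let ψs : ℝ := p + q - 1 - (2 - p - q) * (1 - (p + q - 1) * β) / (σ * lam)
     let A₁ : Matrix (Fin 2) (Fin 2) ℝ := Q + (lam * σ * ψ) • (1 : Matrix (Fin 2) (Fin 2) ℝ)
     let A₂ : Matrix (Fin 2) (Fin 2) ℝ := Q + (lam * σ * ψ) • !![(0:ℝ), 0; 0, 1]
     let A₃ : Matrix (Fin 2) (Fin 2) ℝ := Q + (lam * σ * ψ) • !![(1:ℝ), 0; 0, 0]
     let A₄ : Matrix (Fin 2) (Fin 2) ℝ := Q
     (((0 < A₁.det ∧ 0 < A₂.det ∧ 0 < A₃.det ∧ 0 < A₄.det) ∨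
       (A₁.det < 0 ∧ A₂.det < 0 ∧ A₃.det < 0 ∧ A₄.det < 0)) ↔
      ((ψs < 0 ∧ ψs < ψ ∧ ψ < 1) ∨ (0 < ψs ∧ ψ < ψs)))) := by
  intro K Q ψs A₁ A₂ A₃ A₄
  have hc : 0 < lam * σ := mul_pos hlam hσ
  set κ := (lam * σ + (1 - (p + q - 1) * β)) / (lam * σ) with hκ_def
  have hκ : 0 ≤ κ := div_nonneg (by nlinarith [hp.1, hp.2, hq.1, hq.2, hβ.1, hβ.2]) hc.le
  have ha : 0 ≤ (1 - q) * κ := mul_nonneg (by linarith [hq.2]) hκ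
  have hb : 0 ≤ (1 - p) * κ := mul_nonneg (by linarith [hp.2]) hκ
  have hQ : Q = (lam * σ) •
      !![(1 - p) * κ - 1, -((1 - p) * κ); -((1 - q) * κ), (1 - q) * κ - 1] :=
    Q_eq_smul p q β (lam * σ) hc.ne'
  have hψs : ψs = 1 - (1 - q) * κ - (1 - p) * κ := by
    simp only [ψs, hκ_def]
    field_simp
    ring
  have d₁ : A₁.det = (lam * σ) ^ 2 * ((ψs - ψ) * (1 - ψ)) := by
    rw [show A₁ = Q + (lam * σ * ψ) • _ from rfl, hQ, one_fin_two, det_smul_fin_two_of_add_smul_diag,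
      hψs]
    ring
  have d₂ : A₂.det = (lam * σ) ^ 2 * (ψs - ψ * (1 - (1 - p) * κ)) := by
    rw [show A₂ = Q + (lam * σ * ψ) • _ from rfl, hQ, det_smul_fin_two_of_add_smul_diag, hψs]
    ring
  have d₃ : A₃.det = (lam * σ) ^ 2 * (ψs - ψ * (1 - (1 - q) * κ)) := by
    rw [show A₃ = Q + (lam * σ * ψ) • _ from rfl, hQ, det_smul_fin_two_of_add_smul_diag, hψs]
    ring
  have d₄ : A₄.det = (lam * σ) ^ 2 * ψs := by
    rw [show A₄ = Q from rfl, hQ, det_smul_fin_two_of, hψs]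
  have hc₂ : 0 < (lam * σ) ^ 2 := by positivity
  have hneg (t : ℝ) : (lam * σ) ^ 2 * t < 0 ↔ t < 0 := by
    simp [mul_neg_iff, hc₂, hc₂.not_gt]
  rw [d₁, d₂, d₃, d₄]
  simp only [mul_pos_iff_of_pos_left hc₂, hneg]
  rw [all_pos_iff ha hb hψs hψ, all_neg_iff ha hb hψs hψ, or_comm]
end

section
/- Let p ∈ (0,1), β ∈ (0,1), σ > 0, λ > 0, ξ > 0, ψ > 0. Define K := [[p, 1−p],[0, 1]], Q := I₂ − K − β(I₂ − K)K − λσK, ψ* := p − (1−p)(1−βp)/(σλ), and for each J ⊆ {1,2} the matrix U_J := Q + λσξψ I₂ + λσ(1−ξ)ψ Σ_{i∈J} e_ie_iᵀ. Then the four determinants det U_J, J ⊆ {1,2}, are all nonzero with the same sign if and only if either ψ > max(1, 1/ξ), or max(ψ*, ψ*/ξ) < ψ < min(1, 1/ξ), or ψ < min(ψ*, ψ*/ξ). -/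
/-!
Every `U_J` is upper triangular, with diagonal `λσ (ψ₁ - ψ*)` and `λσ (ψ₂ - 1)`, where `ψᵢ` is the
effective response in state `i`: `ψ` if `i ∈ J` and `ξψ` otherwise. Since `J` chooses the two
responses independently, the four determinants share a sign iff `ψ` and `ξψ` lie on the same side
of `ψ*` and on the same side of `1`; as `ψ* < 1`, this leaves the three intervals of the statement.
-/

open Matrix

theorem Finset.forall_fin_two {P : Finset (Fin 2) → Prop} :
    (∀ J, P J) ↔ P ∅ ∧ P {0} ∧ P {1} ∧ P {0, 1} := by
  refine ⟨fun h => ⟨h _, h _, h _, h _⟩, ?_⟩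
  rintro ⟨h₀, h₁, h₂, h₃⟩ J
  fin_cases J <;> assumption

theorem Matrix.sum_single_eq_diagonal_ite {m α : Type*} [DecidableEq m] [AddCommMonoid α]
    (J : Finset m) (a : α) :
    ∑ i ∈ J, single i i a = diagonal (fun i => if i ∈ J then a else 0) := by
  ext j k
  rw [sum_apply, diagonal_apply]
  by_cases hjk : j = k
  · simp only [hjk, single_apply, and_self, Finset.sum_ite_eq', ↓reduceIte]
  · simp only [hjk, single_apply, ↓reduceIte]
    exact Finset.sum_eq_zero fun i _ => if_neg fun h => hjk (h.1.symm.trans h.2)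

theorem products_pos_or_products_neg_iff {R : Type*} [CommRing R] [LinearOrder R]
    [IsStrictOrderedRing R] (a a' b b' : R) :
    ((0 < a * b ∧ 0 < a' * b ∧ 0 < a * b' ∧ 0 < a' * b') ∨
      (a * b < 0 ∧ a' * b < 0 ∧ a * b' < 0 ∧ a' * b' < 0)) ↔
    0 < a * a' ∧ 0 < b * b' := by
  constructor
  · rintro (⟨h₁, h₂, h₃, -⟩ | ⟨h₁, h₂, h₃, -⟩)
    · exact ⟨by nlinarith [mul_pos h₁ h₂, mul_self_nonneg b],
        by nlinarith [mul_pos h₁ h₃, mul_self_nonneg a]⟩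
    · exact ⟨by nlinarith [mul_pos_of_neg_of_neg h₁ h₂, mul_self_nonneg b],
        by nlinarith [mul_pos_of_neg_of_neg h₁ h₃, mul_self_nonneg a]⟩
  · rintro ⟨ha, hb⟩
    rcases mul_pos_iff.1 ha with ⟨ha, ha'⟩ | ⟨ha, ha'⟩ <;>
      rcases mul_pos_iff.1 hb with ⟨hb, hb'⟩ | ⟨hb, hb'⟩
    · exact .inl ⟨mul_pos ha hb, mul_pos ha' hb, mul_pos ha hb', mul_pos ha' hb'⟩
    · exact .inr ⟨mul_neg_of_pos_of_neg ha hb, mul_neg_of_pos_of_neg ha' hb,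
        mul_neg_of_pos_of_neg ha hb', mul_neg_of_pos_of_neg ha' hb'⟩
    · exact .inr ⟨mul_neg_of_neg_of_pos ha hb, mul_neg_of_neg_of_pos ha' hb,
        mul_neg_of_neg_of_pos ha hb', mul_neg_of_neg_of_pos ha' hb'⟩
    · exact .inl ⟨mul_pos_of_neg_of_neg ha hb, mul_pos_of_neg_of_neg ha' hb,
        mul_pos_of_neg_of_neg ha hb', mul_pos_of_neg_of_neg ha' hb'⟩

theorem mul_mul_mul_pos_iff {R : Type*} [CommRing R] [LinearOrder R] [IsStrictOrderedRing R]
    {c x y : R} (hc : c ≠ 0) : 0 < c * x * (c * y) ↔ 0 < x * y := by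
  rw [mul_mul_mul_comm, mul_pos_iff_of_pos_left (mul_self_pos.2 hc)]

theorem same_side_and_same_side_iff {α : Type*} [LinearOrder α] {s t x y : α} (hst : s < t) :
    ((s < x ∧ s < y) ∨ (x < s ∧ y < s)) ∧ ((t < x ∧ t < y) ∨ (x < t ∧ y < t)) ↔
      (t < x ∧ t < y) ∨ ((s < x ∧ s < y) ∧ x < t ∧ y < t) ∨ (x < s ∧ y < s) := by
  refine ⟨fun h => by tauto, ?_⟩
  rintro (h | h | h)
  · exact ⟨.inl ⟨hst.trans h.1, hst.trans h.2⟩, .inl h⟩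
  · exact ⟨.inl h.1, .inr h.2⟩
  · exact ⟨.inr h, .inr ⟨h.1.trans hst, h.2.trans hst⟩⟩

theorem sub_mul_sub_pos_and_sub_mul_sub_pos_iff {s ξ ψ : ℝ} (hs : s < 1) (hξ : 0 < ξ) :
    0 < (ξ * ψ - s) * (ψ - s) ∧ 0 < (ξ * ψ - 1) * (ψ - 1) ↔
      max 1 (1 / ξ) < ψ ∨ (max s (s / ξ) < ψ ∧ ψ < min 1 (1 / ξ)) ∨ ψ < min s (s / ξ) := by
  simp only [mul_pos_iff, sub_pos, sub_neg]
  rw [same_side_and_same_side_iff hs, max_lt_iff, max_lt_iff, lt_min_iff, lt_min_iff,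
    div_lt_iff₀ hξ, div_lt_iff₀ hξ, lt_div_iff₀ hξ, lt_div_iff₀ hξ, mul_comm ψ ξ]
  tauto

noncomputable section

namespace ShadowRate

variable (p β σ lam ξ ψ : ℝ)

def transitionMatrix : Matrix (Fin 2) (Fin 2) ℝ := !![p, 1 - p; 0, 1]

def systemMatrix : Matrix (Fin 2) (Fin 2) ℝ :=
  1 - transitionMatrix p - β • ((1 - transitionMatrix p) * transitionMatrix p) -
    (lam * σ) • transitionMatrix p

def regimeMatrix (J : Finset (Fin 2)) : Matrix (Fin 2) (Fin 2) ℝ :=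
  systemMatrix p β σ lam + (lam * σ * ξ * ψ) • (1 : Matrix (Fin 2) (Fin 2) ℝ)
    + (lam * σ * (1 - ξ) * ψ) • (∑ i ∈ J, Matrix.single i i (1 : ℝ))

def coherencyCutoff : ℝ := p - (1 - p) * (1 - β * p) / (σ * lam)

/-- Only the fraction `ξ` of the shadow Taylor rate passes through where the bound binds. -/
def effectiveResponse (J : Finset (Fin 2)) (i : Fin 2) : ℝ := if i ∈ J then ψ else ξ * ψ

variable {p β σ lam}

theorem coherencyCutoff_lt_one (hp : p < 1) (hβp : β * p ≤ 1) (hσlam : 0 < σ * lam) :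
    coherencyCutoff p β σ lam < 1 := by
  have : 0 ≤ (1 - p) * (1 - β * p) / (σ * lam) :=
    div_nonneg (mul_nonneg (by linarith) (by linarith)) hσlam.le
  unfold coherencyCutoff
  linarith

theorem systemMatrix_eq : systemMatrix p β σ lam =
    !![(1 - p) * (1 - β * p) - lam * σ * p, -((1 - p) * (1 - β * p + lam * σ)); 0, -(lam * σ)] := by
  ext i j
  fin_cases i <;> fin_cases j <;>
    simp [systemMatrix, transitionMatrix, Matrix.mul_apply, Fin.sum_univ_two] <;> ring

theorem regimeMatrix_eq_add_diagonal (J : Finset (Fin 2)) : regimeMatrix p β σ lam ξ ψ J =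
    systemMatrix p β σ lam + diagonal (fun i => lam * σ * effectiveResponse ξ ψ J i) := by
  rw [regimeMatrix, sum_single_eq_diagonal_ite, ← diagonal_one, ← diagonal_smul, ← diagonal_smul,
    add_assoc, diagonal_add]
  congr 2
  ext i
  simp only [Pi.smul_apply, smul_eq_mul, effectiveResponse]
  split_ifs <;> ring

theorem det_regimeMatrix (hσlam : σ * lam ≠ 0) (J : Finset (Fin 2)) :
    (regimeMatrix p β σ lam ξ ψ J).det =
      lam * σ * (effectiveResponse ξ ψ J 0 - coherencyCutoff p β σ lam) *
        (lam * σ * (effectiveResponse ξ ψ J 1 - 1)) := by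
  obtain ⟨hσ, hlam⟩ := mul_ne_zero_iff.1 hσlam
  rw [regimeMatrix_eq_add_diagonal, systemMatrix_eq, det_fin_two]
  simp only [Matrix.add_apply, of_apply, cons_val', cons_val_zero, cons_val_one, cons_val_fin_one,
    diagonal_apply_eq, diagonal_apply_ne _ one_ne_zero, add_zero, mul_zero, sub_zero,
    coherencyCutoff]
  field_simp
  ring

end ShadowRate

end

open ShadowRate in
theorem nk_ump_cc_condition_iff_general (p β σ lam ξ ψ : ℝ)
    (hp : p ∈ Set.Ioo (0:ℝ) 1) (hβ : β ∈ Set.Ioo (0:ℝ) 1)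
    (hσ : 0 < σ) (hlam : 0 < lam) (hξ : 0 < ξ) :
    (let K : Matrix (Fin 2) (Fin 2) ℝ := !![p, 1 - p; 0, 1]
     let Q : Matrix (Fin 2) (Fin 2) ℝ := 1 - K - β • ((1 - K) * K) - (lam * σ) • K
     let ψs : ℝ := p - (1 - p) * (1 - β * p) / (σ * lam)
     let U : Finset (Fin 2) → Matrix (Fin 2) (Fin 2) ℝ := fun J =>
       Q + (lam * σ * ξ * ψ) • (1 : Matrix (Fin 2) (Fin 2) ℝ)
         + (lam * σ * (1 - ξ) * ψ) • (∑ i ∈ J, Matrix.single i i (1:ℝ))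
     (((∀ J : Finset (Fin 2), 0 < (U J).det) ∨
       (∀ J : Finset (Fin 2), (U J).det < 0)) ↔
      (max 1 (1 / ξ) < ψ ∨
       (max ψs (ψs / ξ) < ψ ∧ ψ < min 1 (1 / ξ)) ∨
       ψ < min ψs (ψs / ξ)))) := by
  intro K Q ψs U
  simp only [show U = regimeMatrix p β σ lam ξ ψ from rfl,
    show ψs = coherencyCutoff p β σ lam from rfl]
  have hσlam : 0 < σ * lam := mul_pos hσ hlam
  have hψs : coherencyCutoff p β σ lam < 1 :=
    coherencyCutoff_lt_one hp.2 (mul_le_one₀ hβ.2.le hp.1.le hp.2.le) hσlam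
  simp only [Finset.forall_fin_two, det_regimeMatrix ξ ψ hσlam.ne', effectiveResponse]
  simp only [Finset.notMem_empty, Finset.mem_singleton, Finset.mem_insert, zero_ne_one,
    one_ne_zero, or_true, true_or, if_true, if_false]
  rw [products_pos_or_products_neg_iff, mul_mul_mul_pos_iff (by positivity),
    mul_mul_mul_pos_iff (by positivity), sub_mul_sub_pos_and_sub_mul_sub_pos_iff hψs hξ]

/-- Coherency condition for the New Keynesian model with unconventional
monetary policy (shadow-rate pass-through `ξ`): the four regime-configuration
determinants `det U_J`, `J ⊆ {1,2}`, are all nonzero with the same sign iff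
`ψ > max(1, 1/ξ)`, or `max(ψ*, ψ*/ξ) < ψ < min(1, 1/ξ)`, or
`ψ < min(ψ*, ψ*/ξ)`. -/
theorem nk_ump_cc_condition_iff (p β σ lam ξ ψ : ℝ)
    (hp : p ∈ Set.Ioo (0:ℝ) 1) (hβ : β ∈ Set.Ioo (0:ℝ) 1)
    (hσ : 0 < σ) (hlam : 0 < lam) (hξ : 0 < ξ) (hψ : 0 < ψ) :
    (let K : Matrix (Fin 2) (Fin 2) ℝ := !![p, 1 - p; 0, 1]
     let Q : Matrix (Fin 2) (Fin 2) ℝ := 1 - K - β • ((1 - K) * K) - (lam * σ) • K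
     let ψs : ℝ := p - (1 - p) * (1 - β * p) / (σ * lam)
     let U : Finset (Fin 2) → Matrix (Fin 2) (Fin 2) ℝ := fun J =>
       Q + (lam * σ * ξ * ψ) • (1 : Matrix (Fin 2) (Fin 2) ℝ)
         + (lam * σ * (1 - ξ) * ψ) • (∑ i ∈ J, Matrix.single i i (1:ℝ))
     (((∀ J : Finset (Fin 2), 0 < (U J).det) ∨
       (∀ J : Finset (Fin 2), (U J).det < 0)) ↔
      (max 1 (1 / ξ) < ψ ∨
       (max ψs (ψs / ξ) < ψ ∧ ψ < min 1 (1 / ξ)) ∨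
       ψ < min ψs (ψs / ξ)))) :=
  nk_ump_cc_condition_iff_general p β σ lam ξ ψ hp hβ hσ hlam hξ
end

section
/- Let 0 < p < 1, φ ≥ 0, ψ > 0. Define K := [[p, 1−p],[0, 1]], e₁ := (1,0)ᵀ, e₂ := (0,1)ᵀ, and the matrices C₁ := K − (φ+ψ)I₂, C₂ := K − (φ+ψ)e₂e₂ᵀ, C₃ := K − (φ+ψ)e₁e₁ᵀ, C₄ := K. Then the four determinants det C₁, det C₂, det C₃, det C₄ are all nonzero with the same sign if and only if ψ + φ < p. -/
/-! With `s = φ + ψ`, the determinants are `(p - s)(1 - s)`, `p(1 - s)`, `p - s` and `p`.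
Since `det C₄ = p > 0`, a common sign must be positive, and as `p < 1` this happens
exactly when `s < p`. -/

open Matrix

theorem det_fin_two_upper_sub_smul_diag {R : Type*} [CommRing R] (a b c s x y : R) :
    det (!![a, b; 0, c] - s • !![x, 0; 0, y]) = (a - s * x) * (c - s * y) := by
  have h : !![a, b; 0, c] - s • !![x, 0; 0, y] = !![a - s * x, b; 0, c - s * y] := by
    ext i j
    fin_cases i <;> fin_cases j <;> simp
  rw [h, det_fin_two_of]
  ring

theorem four_pos_or_four_neg_iff {a b c d : ℝ} (hd : 0 < d) :
    ((0 < a ∧ 0 < b ∧ 0 < c ∧ 0 < d) ∨ (a < 0 ∧ b < 0 ∧ c < 0 ∧ d < 0)) ↔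
      0 < a ∧ 0 < b ∧ 0 < c := by
  constructor
  · rintro (⟨ha, hb, hc, -⟩ | ⟨-, -, -, hd'⟩)
    · exact ⟨ha, hb, hc⟩
    · exact absurd hd' hd.not_gt
  · rintro ⟨ha, hb, hc⟩
    exact Or.inl ⟨ha, hb, hc, hd⟩

theorem regime_dets_pos_iff {p s : ℝ} (hp0 : 0 < p) (hp1 : p < 1) :
    (0 < (p - s) * (1 - s) ∧ 0 < p * (1 - s) ∧ 0 < p - s) ↔ s < p := by
  constructor
  · rintro ⟨-, -, h⟩
    exact sub_pos.1 h
  · intro h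
    have hps : 0 < p - s := sub_pos.2 h
    have hs1 : 0 < 1 - s := by linarith
    exact ⟨mul_pos hps hs1, mul_pos hp0 hs1, hps⟩

theorem inertial_taylor_cc_iff_general (p phi ψ : ℝ)
    (hp0 : 0 < p) (hp1 : p < 1) :
    (let K : Matrix (Fin 2) (Fin 2) ℝ := !![p, 1 - p; 0, 1]
     let C₁ : Matrix (Fin 2) (Fin 2) ℝ := K - (phi + ψ) • (1 : Matrix (Fin 2) (Fin 2) ℝ)
     let C₂ : Matrix (Fin 2) (Fin 2) ℝ := K - (phi + ψ) • !![(0:ℝ), 0; 0, 1]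
     let C₃ : Matrix (Fin 2) (Fin 2) ℝ := K - (phi + ψ) • !![(1:ℝ), 0; 0, 0]
     let C₄ : Matrix (Fin 2) (Fin 2) ℝ := K
     (((0 < C₁.det ∧ 0 < C₂.det ∧ 0 < C₃.det ∧ 0 < C₄.det) ∨
       (C₁.det < 0 ∧ C₂.det < 0 ∧ C₃.det < 0 ∧ C₄.det < 0)) ↔ ψ + phi < p)) := by
  intro K C₁ C₂ C₃ C₄
  have hC₄ : C₄.det = p := by simp [C₄, K, det_fin_two_of]
  have hC₁ : C₁.det = (p - (phi + ψ)) * (1 - (phi + ψ)) := by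
    rw [show C₁ = K - (phi + ψ) • !![1, 0; 0, 1] by rw [← one_fin_two],
      det_fin_two_upper_sub_smul_diag]
    ring
  have hC₂ : C₂.det = p * (1 - (phi + ψ)) := by
    rw [det_fin_two_upper_sub_smul_diag]
    ring
  have hC₃ : C₃.det = p - (phi + ψ) := by
    rw [det_fin_two_upper_sub_smul_diag]
    ring
  rw [four_pos_or_four_neg_iff (hC₄ ▸ hp0), hC₁, hC₂, hC₃, regime_dets_pos_iff hp0 hp1, add_comm]

/-- Coherency and completeness condition for the Fisher-equation model with an
inertial Taylor rule, after quasi-differencing: the four regime-configuration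
determinants `det C₁, …, det C₄` are all nonzero with the same sign iff
`ψ + φ < p`. -/
theorem inertial_taylor_cc_iff (p phi ψ : ℝ)
    (hp0 : 0 < p) (hp1 : p < 1) (hphi : 0 ≤ phi) (hψ : 0 < ψ) :
    (let K : Matrix (Fin 2) (Fin 2) ℝ := !![p, 1 - p; 0, 1]
     let C₁ : Matrix (Fin 2) (Fin 2) ℝ := K - (phi + ψ) • (1 : Matrix (Fin 2) (Fin 2) ℝ)
     let C₂ : Matrix (Fin 2) (Fin 2) ℝ := K - (phi + ψ) • !![(0:ℝ), 0; 0, 1]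
     let C₃ : Matrix (Fin 2) (Fin 2) ℝ := K - (phi + ψ) • !![(1:ℝ), 0; 0, 0]
     let C₄ : Matrix (Fin 2) (Fin 2) ℝ := K
     (((0 < C₁.det ∧ 0 < C₂.det ∧ 0 < C₃.det ∧ 0 < C₄.det) ∨
       (C₁.det < 0 ∧ C₂.det < 0 ∧ C₃.det < 0 ∧ C₄.det < 0)) ↔ ψ + phi < p)) :=
  inertial_taylor_cc_iff_general p phi ψ hp0 hp1
end

section
/- Let ψ > 1, φ ≥ 0, 0 < p < 1, μ > 0, and r^L < 0. Consider the system in (Ỹ₁, Ỹ₂) ∈ ℝ² given, for each state i ∈ {1,2}, by: −(ψ+φ)Ỹ_i + (KỸ)_i − (KM̂)_i = 0 if ψỸ_i > −μ, and (KỸ)_i − (KM̂)_i + μ(φ+ψ)/ψ = 0 if ψỸ_i ≤ −μ, where K := [[p, 1−p],[0, 1]] and M̂ := (−r^L, 0)ᵀ. Then: (i) the PIR–PIR solution Ỹ = (p r^L/(ψ+φ−p), 0) satisfies its regime inequalities if and only if −r^L < μ(ψ+φ−p)/(ψp); (ii) the ZIR–PIR solution Ỹ = (−r^L − μ(φ+ψ)/(ψp),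 0) satisfies its regime inequalities if and only if −r^L ≤ μ(ψ+φ−p)/(ψp). Hence a minimum state variable solution with the zero lower bound slack in the absorbing state exists if and only if −r^L ≤ μ(ψ+φ−p)/(ψp). -/
open Matrix

/-!
In the absorbing state the Taylor rule is slack, so its equation reads `(1 - ψ - φ) Ỹ₂ = 0`,
forcing `Ỹ₂ = 0` because `ψ + φ > 1`. With `Ỹ₂ = 0` each regime in the transitory state is a
linear equation in `Ỹ₁` with a unique root, and the regime inequality for that root is, after
clearing the positive denominators `ψ + φ - p` and `ψ p`, a comparison of `-r^L` with the
threshold `μ(ψ + φ - p)/(ψ p)`: strict for the PIR root, weak for the ZIR root. An MSV solution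
with the absorbing state slack is one of these two, and the strict condition implies the weak one.
-/

namespace InertialTaylor

-- The paper's `K` and `M̂`; index `0` is the transitory state and `1` the absorbing one.
def transition (p : ℝ) : Matrix (Fin 2) (Fin 2) ℝ := !![p, 1 - p; 0, 1]

def shock (rL : ℝ) : Fin 2 → ℝ := ![-rL, 0]

def PIREq (ψ φ p rL : ℝ) (Y : Fin 2 → ℝ) (i : Fin 2) : Prop :=
  -(ψ + φ) * Y i + (transition p *ᵥ Y) i - (transition p *ᵥ shock rL) i = 0

def ZIREq (ψ φ p μ rL : ℝ) (Y : Fin 2 → ℝ) (i : Fin 2) : Prop :=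
  (transition p *ᵥ Y) i - (transition p *ᵥ shock rL) i + μ * (φ + ψ) / ψ = 0

@[simp]
lemma transition_mulVec_zero (p : ℝ) (Y : Fin 2 → ℝ) :
    (transition p *ᵥ Y) 0 = p * Y 0 + (1 - p) * Y 1 := by
  simp [transition, mulVec, dotProduct, Fin.sum_univ_two]

@[simp]
lemma transition_mulVec_one (p : ℝ) (Y : Fin 2 → ℝ) : (transition p *ᵥ Y) 1 = Y 1 := by
  simp [transition, mulVec, dotProduct, Fin.sum_univ_two]

@[simp] lemma shock_zero (rL : ℝ) : shock rL 0 = -rL := rfl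

@[simp] lemma shock_one (rL : ℝ) : shock rL 1 = 0 := rfl

variable {ψ φ p μ rL : ℝ} {Y : Fin 2 → ℝ}

lemma pirEq_one_iff (h : ψ + φ ≠ 1) : PIREq ψ φ p rL Y 1 ↔ Y 1 = 0 := by
  have factor : -(ψ + φ) * Y 1 + Y 1 = (1 - (ψ + φ)) * Y 1 := by ring
  simp only [PIREq, transition_mulVec_one, shock_one, sub_zero, factor]
  exact mul_eq_zero_iff_left (sub_ne_zero.mpr h.symm)

lemma pirEq_zero_iff (hd : ψ + φ - p ≠ 0) (hY : Y 1 = 0) :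
    PIREq ψ φ p rL Y 0 ↔ Y 0 = p * rL / (ψ + φ - p) := by
  simp only [PIREq, transition_mulVec_zero, shock_zero, shock_one, hY, eq_div_iff hd]
  constructor <;> intro e <;> linarith

lemma zirEq_zero_iff (hψ : ψ ≠ 0) (hp : p ≠ 0) (hY : Y 1 = 0) :
    ZIREq ψ φ p μ rL Y 0 ↔ Y 0 = -rL - μ * (φ + ψ) / (ψ * p) := by
  have factor : p * Y 0 + p * rL + μ * (φ + ψ) / ψ
      = p * (Y 0 - (-rL - μ * (φ + ψ) / (ψ * p))) := by
    field_simp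
    ring
  rw [← sub_eq_zero (a := Y 0), ← mul_eq_zero_iff_left hp, ← factor]
  simp only [ZIREq, transition_mulVec_zero, shock_zero, shock_one, hY]
  constructor <;> intro e <;> linarith

lemma neg_lt_mul_pir_iff (hψ : 0 < ψ) (hp : 0 < p) (hd : 0 < ψ + φ - p) :
    -μ < ψ * (p * rL / (ψ + φ - p)) ↔ -rL < μ * (ψ + φ - p) / (ψ * p) := by
  rw [mul_div_assoc', ← mul_assoc, lt_div_iff₀ hd, lt_div_iff₀ (mul_pos hψ hp)]
  constructor <;> intro h <;> linarith

lemma mul_zir_le_neg_iff (hψ : 0 < ψ) (hp : 0 < p) :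
    ψ * (-rL - μ * (φ + ψ) / (ψ * p)) ≤ -μ ↔ -rL ≤ μ * (ψ + φ - p) / (ψ * p) := by
  have clear : ψ * (-rL - μ * (φ + ψ) / (ψ * p)) = (ψ * p * -rL - μ * (φ + ψ)) / p := by
    field_simp
  rw [clear, div_le_iff₀ hp, le_div_iff₀ (mul_pos hψ hp)]
  constructor <;> intro h <;> linarith

noncomputable def pirPir (ψ φ p rL : ℝ) : Fin 2 → ℝ := ![p * rL / (ψ + φ - p), 0]

noncomputable def zirPir (ψ φ p μ rL : ℝ) : Fin 2 → ℝ := ![-rL - μ * (φ + ψ) / (ψ * p), 0]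

lemma pirEq_pirPir (h : ψ + φ ≠ 1) (hd : ψ + φ - p ≠ 0) (i : Fin 2) :
    PIREq ψ φ p rL (pirPir ψ φ p rL) i := by
  fin_cases i
  · exact (pirEq_zero_iff hd rfl).mpr rfl
  · exact (pirEq_one_iff h).mpr rfl

lemma forall_neg_lt_mul_pirPir_iff (hψ : 0 < ψ) (hp : 0 < p) (hd : 0 < ψ + φ - p) (hμ : 0 < μ) :
    (∀ i, -μ < ψ * pirPir ψ φ p rL i) ↔ -rL < μ * (ψ + φ - p) / (ψ * p) := by
  simp only [Fin.forall_fin_two, pirPir, cons_val_zero, cons_val_one, mul_zero, neg_lt_zero,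
    hμ, and_true]
  exact neg_lt_mul_pir_iff hψ hp hd

lemma zirEq_zirPir_and_pirEq_zirPir (h : ψ + φ ≠ 1) (hψ : ψ ≠ 0) (hp : p ≠ 0) :
    ZIREq ψ φ p μ rL (zirPir ψ φ p μ rL) 0 ∧ PIREq ψ φ p rL (zirPir ψ φ p μ rL) 1 :=
  ⟨(zirEq_zero_iff hψ hp rfl).mpr rfl, (pirEq_one_iff h).mpr rfl⟩

lemma zirPir_regime_iff (hψ : 0 < ψ) (hp : 0 < p) (hμ : 0 < μ) :
    (ψ * zirPir ψ φ p μ rL 0 ≤ -μ ∧ -μ < ψ * zirPir ψ φ p μ rL 1)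
      ↔ -rL ≤ μ * (ψ + φ - p) / (ψ * p) := by
  simp only [zirPir, cons_val_zero, cons_val_one, mul_zero, neg_lt_zero, hμ, and_true]
  exact mul_zir_le_neg_iff hψ hp

lemma exists_slack_absorbing_solution_iff (h : ψ + φ ≠ 1) (hψ : 0 < ψ) (hp : 0 < p)
    (hd : 0 < ψ + φ - p) (hμ : 0 < μ) :
    (∃ Y : Fin 2 → ℝ,
        (∀ i, (-μ < ψ * Y i ∧ PIREq ψ φ p rL Y i) ∨ (ψ * Y i ≤ -μ ∧ ZIREq ψ φ p μ rL Y i)) ∧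
        -μ < ψ * Y 1) ↔
      -rL ≤ μ * (ψ + φ - p) / (ψ * p) := by
  constructor
  · rintro ⟨Y, hY, hslack⟩
    have hY1 : Y 1 = 0 := by
      rcases hY 1 with ⟨-, hpir⟩ | ⟨hbind, -⟩
      · exact (pirEq_one_iff h).mp hpir
      · exact absurd hslack (not_lt.mpr hbind)
    rcases hY 0 with ⟨hslack0, hpir⟩ | ⟨hbind0, hzir⟩
    · rw [(pirEq_zero_iff hd.ne' hY1).mp hpir] at hslack0
      exact ((neg_lt_mul_pir_iff hψ hp hd).mp hslack0).le
    · rw [(zirEq_zero_iff hψ.ne' hp.ne' hY1).mp hzir] at hbind0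
      exact (mul_zir_le_neg_iff hψ hp).mp hbind0
  · intro hthreshold
    obtain ⟨hbind, hslack⟩ := (zirPir_regime_iff (φ := φ) (rL := rL) hψ hp hμ).mpr hthreshold
    obtain ⟨hzir, hpir⟩ := zirEq_zirPir_and_pirEq_zirPir (μ := μ) (rL := rL) h hψ.ne' hp.ne'
    exact ⟨zirPir ψ φ p μ rL, Fin.forall_fin_two.mpr ⟨.inr ⟨hbind, hzir⟩, .inl ⟨hslack, hpir⟩⟩,
      hslack⟩

end InertialTaylor

open InertialTaylor in
theorem inertial_taylor_support_restriction_general (ψ phi p μ rL : ℝ)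
    (hψ : 1 < ψ) (hphi : 0 ≤ phi) (hp0 : 0 < p) (hp1 : p < 1)
    (hμ : 0 < μ) :
    (let K : Matrix (Fin 2) (Fin 2) ℝ := !![p, 1 - p; 0, 1]
     let Mhat : Fin 2 → ℝ := ![-rL, 0]
     let eqPIR : (Fin 2 → ℝ) → Fin 2 → Prop := fun Y i =>
       -(ψ + phi) * Y i + (K.mulVec Y) i - (K.mulVec Mhat) i = 0
     let eqZIR : (Fin 2 → ℝ) → Fin 2 → Prop := fun Y i =>
       (K.mulVec Y) i - (K.mulVec Mhat) i + μ * (phi + ψ) / ψ = 0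
     let Ypp : Fin 2 → ℝ := ![p * rL / (ψ + phi - p), 0]
     let Yzp : Fin 2 → ℝ := ![-rL - μ * (phi + ψ) / (ψ * p), 0]
     ((∀ i, eqPIR Ypp i) ∧
       ((∀ i, -μ < ψ * Ypp i) ↔ -rL < μ * (ψ + phi - p) / (ψ * p))) ∧
     ((eqZIR Yzp 0 ∧ eqPIR Yzp 1) ∧
       ((ψ * Yzp 0 ≤ -μ ∧ -μ < ψ * Yzp 1) ↔ -rL ≤ μ * (ψ + phi - p) / (ψ * p))) ∧
     ((∃ Y : Fin 2 → ℝ,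
        (∀ i, (-μ < ψ * Y i ∧ eqPIR Y i) ∨ (ψ * Y i ≤ -μ ∧ eqZIR Y i)) ∧
        -μ < ψ * Y 1) ↔
       -rL ≤ μ * (ψ + phi - p) / (ψ * p))) := by
  have hψ0 : 0 < ψ := zero_lt_one.trans hψ
  have hd : 0 < ψ + phi - p := by linarith
  have hψφ : ψ + phi ≠ 1 := by linarith
  exact ⟨⟨pirEq_pirPir hψφ hd.ne', forall_neg_lt_mul_pirPir_iff hψ0 hp0 hd hμ⟩,
    ⟨zirEq_zirPir_and_pirEq_zirPir hψφ hψ0.ne' hp0.ne', zirPir_regime_iff hψ0 hp0 hμ⟩,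
    exists_slack_absorbing_solution_iff hψφ hψ0 hp0 hd hμ⟩

/-- Support restrictions in the quasi-differenced Fisher-equation model with an
inertial Taylor rule: (i) the PIR–PIR candidate solution satisfies its regime
inequalities iff `−r^L < μ(ψ+φ−p)/(ψp)`; (ii) the ZIR–PIR candidate solution
satisfies its regime inequalities iff `−r^L ≤ μ(ψ+φ−p)/(ψp)`; hence an MSV
solution with the ZLB slack in the absorbing state exists iff
`−r^L ≤ μ(ψ+φ−p)/(ψp)`. -/
theorem inertial_taylor_support_restriction (ψ phi p μ rL : ℝ)
    (hψ : 1 < ψ) (hphi : 0 ≤ phi) (hp0 : 0 < p) (hp1 : p < 1)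
    (hμ : 0 < μ) (hrL : rL < 0) :
    (let K : Matrix (Fin 2) (Fin 2) ℝ := !![p, 1 - p; 0, 1]
     let Mhat : Fin 2 → ℝ := ![-rL, 0]
     let eqPIR : (Fin 2 → ℝ) → Fin 2 → Prop := fun Y i =>
       -(ψ + phi) * Y i + (K.mulVec Y) i - (K.mulVec Mhat) i = 0
     let eqZIR : (Fin 2 → ℝ) → Fin 2 → Prop := fun Y i =>
       (K.mulVec Y) i - (K.mulVec Mhat) i + μ * (phi + ψ) / ψ = 0
     let Ypp : Fin 2 → ℝ := ![p * rL / (ψ + phi - p), 0]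
     let Yzp : Fin 2 → ℝ := ![-rL - μ * (phi + ψ) / (ψ * p), 0]
     ((∀ i, eqPIR Ypp i) ∧
       ((∀ i, -μ < ψ * Ypp i) ↔ -rL < μ * (ψ + phi - p) / (ψ * p))) ∧
     ((eqZIR Yzp 0 ∧ eqPIR Yzp 1) ∧
       ((ψ * Yzp 0 ≤ -μ ∧ -μ < ψ * Yzp 1) ↔ -rL ≤ μ * (ψ + phi - p) / (ψ * p))) ∧
     ((∃ Y : Fin 2 → ℝ,
        (∀ i, (-μ < ψ * Y i ∧ eqPIR Y i) ∨ (ψ * Y i ≤ -μ ∧ eqZIR Y i)) ∧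
        -μ < ψ * Y 1) ↔
       -rL ≤ μ * (ψ + phi - p) / (ψ * p))) :=
  inertial_taylor_support_restriction_general ψ phi p μ rL hψ hphi hp0 hp1 hμ
end

section
/- Let ψ > 1, 0 < p < 1, μ > 0, and r^L < 0. Consider the system in (π̂₁, π̂₂) ∈ ℝ²: p π̂₁ + (1−p)π̂₂ = max{−μ, ψπ̂₁} − p r^L and π̂₂ = max{−μ, ψπ̂₂}. Then π̂₂ ∈ {0, −μ} in any solution, and the solution set is exactly the set of the following pairs whose stated condition holds: (i) (p r^L/(ψ−p), 0), valid if and only if −r^L < μ(ψ−p)/(ψp); (ii) (−r^L − μ/p, 0), valid if and only if −r^L ≤ μ(ψ−p)/(ψp); (iii) ((p r^L − (1−p)μ)/(ψ−p), −μ), valid if and only if −r^L < μ(ψ−1)/ψ; (iv) (−r^L − μ, −μ), valid if and only if −r^L ≤ μ(ψ−1)/ψ. In particular, the system has no solution if and only if −r^L > μ(ψ−p)/(ψp), and up to four distinct solutions otherwise. -/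
/-!
For `ψ > 1` the absorbing-state equation `y = max (-μ) (ψ y)` forces `y = 0` (bound slack) or
`y = -μ` (bound binding). For each such `y` the transitory-state equation
`p x + c = max (-μ) (ψ x)` is, on either side of the kink `ψ x = -μ`, a linear equation with
nonzero coefficient (`ψ - p` resp. `p`), so each side contributes one candidate root, which is a
solution iff it lies on its own side of the kink. This gives the four candidates and their conditions; the
condition of the binding-bound root with `y = 0` is the weakest of the four, whence the criterion
for the empty set.
-/

theorem eq_max_neg_mul_self_iff {ψ μ y : ℝ} (hψ : 1 < ψ) (hμ : 0 ≤ μ) :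
    y = max (-μ) (ψ * y) ↔ y = 0 ∨ y = -μ := by
  constructor
  · intro h
    rcases le_or_gt (ψ * y) (-μ) with hy | hy
    · rw [max_eq_left hy] at h
      exact Or.inr h
    · rw [max_eq_right hy.le] at h
      have : (ψ - 1) * y = 0 := by linarith
      exact Or.inl ((mul_eq_zero.1 this).resolve_left (by linarith))
  · rintro (rfl | rfl)
    · simp [hμ]
    · rw [max_eq_left (by nlinarith)]

theorem add_eq_max_iff {p ψ μ c x : ℝ} (hp : 0 < p) (hpψ : p < ψ) :
    p * x + c = max (-μ) (ψ * x) ↔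
      (x = c / (ψ - p) ∧ -μ * (ψ - p) < ψ * c) ∨
        (x = (-μ - c) / p ∧ ψ * (-μ - c) ≤ -μ * p) := by
  have hψp : 0 < ψ - p := sub_pos.2 hpψ
  constructor
  · intro h
    rcases lt_or_ge (-μ) (ψ * x) with hx | hx
    · rw [max_eq_right hx.le] at h
      obtain rfl : c = (ψ - p) * x := by linarith
      exact Or.inl ⟨by field_simp, by nlinarith⟩
    · rw [max_eq_left hx] at h
      obtain rfl : c = -μ - p * x := by linarith
      exact Or.inr ⟨by field_simp; ring, by nlinarith⟩
  · rintro (⟨rfl, hc⟩ | ⟨rfl, hc⟩)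
    · have hpir : -μ < ψ * (c / (ψ - p)) := by
        rw [mul_div_assoc', lt_div_iff₀ hψp]; linarith
      rw [max_eq_right hpir.le]
      field_simp
      ring
    · have hzir : ψ * ((-μ - c) / p) ≤ -μ := by
        rw [mul_div_assoc', div_le_iff₀ hp]; linarith
      rw [max_eq_left hzir]
      field_simp
      ring

theorem transitory_eq_iff_of_absorbing_pir {ψ p μ rL x : ℝ} (hp : 0 < p) (hpψ : p < ψ) :
    p * x + (1 - p) * 0 = max (-μ) (ψ * x) - p * rL ↔
      (x = p * rL / (ψ - p) ∧ -rL < μ * (ψ - p) / (ψ * p)) ∨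
        (x = -rL - μ / p ∧ -rL ≤ μ * (ψ - p) / (ψ * p)) := by
  have hψ0 : 0 < ψ * p := mul_pos (hp.trans hpψ) hp
  rw [eq_sub_iff_add_eq, add_assoc, add_eq_max_iff hp hpψ]
  refine or_congr (and_congr ?_ ?_) (and_congr ?_ ?_)
  · ring_nf
  · rw [lt_div_iff₀ hψ0]; constructor <;> intro <;> nlinarith
  · rw [show (-μ - ((1 - p) * 0 + p * rL)) / p = -rL - μ / p by field_simp; ring]
  · rw [le_div_iff₀ hψ0]; constructor <;> intro <;> nlinarith

theorem transitory_eq_iff_of_absorbing_zir {ψ p μ rL x : ℝ} (hp : 0 < p) (hpψ : p < ψ) :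
    p * x + (1 - p) * -μ = max (-μ) (ψ * x) - p * rL ↔
      (x = (p * rL - (1 - p) * μ) / (ψ - p) ∧ -rL < μ * (ψ - 1) / ψ) ∨
        (x = -rL - μ ∧ -rL ≤ μ * (ψ - 1) / ψ) := by
  have hψ0 : 0 < ψ := hp.trans hpψ
  rw [eq_sub_iff_add_eq, add_assoc, add_eq_max_iff hp hpψ]
  refine or_congr (and_congr ?_ ?_) (and_congr ?_ ?_)
  · ring_nf
  · rw [lt_div_iff₀ hψ0]; constructor <;> intro <;> nlinarith
  · rw [show (-μ - ((1 - p) * -μ + p * rL)) / p = -rL - μ by field_simp; ring]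
  · rw [le_div_iff₀ hψ0]; constructor <;> intro <;> nlinarith


def msvSolutions (ψ p μ rL : ℝ) : Set (ℝ × ℝ) :=
  {π | p * π.1 + (1 - p) * π.2 = max (-μ) (ψ * π.1) - p * rL ∧ π.2 = max (-μ) (ψ * π.2)}

theorem msvSolutions_eq {ψ p μ rL : ℝ} (hψ : 1 < ψ) (hp0 : 0 < p) (hp1 : p < 1)
    (hμ : 0 ≤ μ) :
    msvSolutions ψ p μ rL =
      {π | (π = (p * rL / (ψ - p), 0) ∧ -rL < μ * (ψ - p) / (ψ * p)) ∨
        (π = (-rL - μ / p, 0) ∧ -rL ≤ μ * (ψ - p) / (ψ * p)) ∨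
        (π = ((p * rL - (1 - p) * μ) / (ψ - p), -μ) ∧ -rL < μ * (ψ - 1) / ψ) ∨
        (π = (-rL - μ, -μ) ∧ -rL ≤ μ * (ψ - 1) / ψ)} := by
  have hpψ : p < ψ := hp1.trans hψ
  ext ⟨x, y⟩
  simp only [msvSolutions, Set.mem_ofPred_eq, Prod.mk.injEq, eq_max_neg_mul_self_iff hψ hμ]
  constructor
  · rintro ⟨h, rfl | rfl⟩
    · rcases (transitory_eq_iff_of_absorbing_pir hp0 hpψ).1 h with ⟨rfl, hc⟩ | ⟨rfl, hc⟩
      · exact Or.inl ⟨⟨rfl, rfl⟩, hc⟩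
      · exact Or.inr (Or.inl ⟨⟨rfl, rfl⟩, hc⟩)
    · rcases (transitory_eq_iff_of_absorbing_zir hp0 hpψ).1 h with ⟨rfl, hc⟩ | ⟨rfl, hc⟩
      · exact Or.inr (Or.inr (Or.inl ⟨⟨rfl, rfl⟩, hc⟩))
      · exact Or.inr (Or.inr (Or.inr ⟨⟨rfl, rfl⟩, hc⟩))
  · rintro (⟨⟨rfl, rfl⟩, hc⟩ | ⟨⟨rfl, rfl⟩, hc⟩ | ⟨⟨rfl, rfl⟩, hc⟩ | ⟨⟨rfl, rfl⟩, hc⟩)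
    · exact ⟨(transitory_eq_iff_of_absorbing_pir hp0 hpψ).2 (Or.inl ⟨rfl, hc⟩), Or.inl rfl⟩
    · exact ⟨(transitory_eq_iff_of_absorbing_pir hp0 hpψ).2 (Or.inr ⟨rfl, hc⟩), Or.inl rfl⟩
    · exact ⟨(transitory_eq_iff_of_absorbing_zir hp0 hpψ).2 (Or.inl ⟨rfl, hc⟩), Or.inr rfl⟩
    · exact ⟨(transitory_eq_iff_of_absorbing_zir hp0 hpψ).2 (Or.inr ⟨rfl, hc⟩), Or.inr rfl⟩

theorem mul_sub_one_div_le_mul_sub_div_mul {ψ p μ : ℝ} (hψ : 0 < ψ) (hp0 : 0 < p)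
    (hp1 : p ≤ 1) (hμ : 0 ≤ μ) : μ * (ψ - 1) / ψ ≤ μ * (ψ - p) / (ψ * p) := by
  rw [div_le_div_iff₀ hψ (by positivity)]
  nlinarith [mul_nonneg (mul_nonneg hμ hψ.le) (mul_nonneg hψ.le (sub_nonneg.2 hp1))]

theorem msvSolutions_eq_empty_iff {ψ p μ rL : ℝ} (hψ : 1 < ψ) (hp0 : 0 < p) (hp1 : p < 1)
    (hμ : 0 ≤ μ) : msvSolutions ψ p μ rL = ∅ ↔ μ * (ψ - p) / (ψ * p) < -rL := by
  have hthr := mul_sub_one_div_le_mul_sub_div_mul (ψ := ψ) (μ := μ) (by linarith) hp0 hp1.le hμ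
  rw [msvSolutions_eq hψ hp0 hp1 hμ, Set.eq_empty_iff_forall_notMem]
  constructor
  · intro h
    by_contra! hc
    exact h _ (Or.inr (Or.inl ⟨rfl, hc⟩))
  · rintro h π (⟨-, hc⟩ | ⟨-, hc⟩ | ⟨-, hc⟩ | ⟨-, hc⟩) <;> linarith

theorem msvSolutions_subset {ψ p μ rL : ℝ} (hψ : 1 < ψ) (hp0 : 0 < p) (hp1 : p < 1)
    (hμ : 0 ≤ μ) :
    msvSolutions ψ p μ rL ⊆ ↑({(p * rL / (ψ - p), 0), (-rL - μ / p, 0),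
      ((p * rL - (1 - p) * μ) / (ψ - p), -μ), (-rL - μ, -μ)} : Finset (ℝ × ℝ)) := by
  rw [msvSolutions_eq hψ hp0 hp1 hμ]
  rintro π (⟨rfl, -⟩ | ⟨rfl, -⟩ | ⟨rfl, -⟩ | ⟨rfl, -⟩) <;> simp

theorem fisher_msv_solutions_general (ψ p μ rL : ℝ)
    (hψ : 1 < ψ) (hp0 : 0 < p) (hp1 : p < 1) (hμ : 0 < μ) :
    (let S : Set (ℝ × ℝ) := {π | p * π.1 + (1 - p) * π.2 = max (-μ) (ψ * π.1) - p * rL ∧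
                                  π.2 = max (-μ) (ψ * π.2)}
     (∀ π ∈ S, π.2 = 0 ∨ π.2 = -μ) ∧
     (S = {π | (π = (p * rL / (ψ - p), 0) ∧ -rL < μ * (ψ - p) / (ψ * p)) ∨
               (π = (-rL - μ / p, 0) ∧ -rL ≤ μ * (ψ - p) / (ψ * p)) ∨
               (π = ((p * rL - (1 - p) * μ) / (ψ - p), -μ) ∧ -rL < μ * (ψ - 1) / ψ) ∨
               (π = (-rL - μ, -μ) ∧ -rL ≤ μ * (ψ - 1) / ψ)}) ∧
     (S = ∅ ↔ μ * (ψ - p) / (ψ * p) < -rL) ∧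
     S.Finite ∧ S.ncard ≤ 4) := by
  show let S := msvSolutions ψ p μ rL; _
  intro S
  have hsub := msvSolutions_subset (rL := rL) hψ hp0 hp1 hμ.le
  refine ⟨fun π hπ => (eq_max_neg_mul_self_iff hψ hμ.le).1 hπ.2,
    msvSolutions_eq hψ hp0 hp1 hμ.le, msvSolutions_eq_empty_iff hψ hp0 hp1 hμ.le,
    (Finset.finite_toSet _).subset hsub, ?_⟩
  calc S.ncard ≤ _ := Set.ncard_le_ncard hsub (Finset.finite_toSet _)
    _ ≤ 4 := by rw [Set.ncard_coe_finset]; exact Finset.card_le_four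

/-- Multiplicity of MSV solutions in the Fisher-equation model with an active
Taylor rule and a transitory/absorbing two-state shock: in any solution
`π̂₂ ∈ {0, −μ}`; the solution set is exactly the set of the four listed pairs
under their respective conditions; there is no solution iff
`−r^L > μ(ψ−p)/(ψp)`; and there are at most four solutions. -/
theorem fisher_msv_solutions (ψ p μ rL : ℝ)
    (hψ : 1 < ψ) (hp0 : 0 < p) (hp1 : p < 1) (hμ : 0 < μ) (hrL : rL < 0) :
    (let S : Set (ℝ × ℝ) := {π | p * π.1 + (1 - p) * π.2 = max (-μ) (ψ * π.1) - p * rL ∧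
                                  π.2 = max (-μ) (ψ * π.2)}
     (∀ π ∈ S, π.2 = 0 ∨ π.2 = -μ) ∧
     (S = {π | (π = (p * rL / (ψ - p), 0) ∧ -rL < μ * (ψ - p) / (ψ * p)) ∨
               (π = (-rL - μ / p, 0) ∧ -rL ≤ μ * (ψ - p) / (ψ * p)) ∨
               (π = ((p * rL - (1 - p) * μ) / (ψ - p), -μ) ∧ -rL < μ * (ψ - 1) / ψ) ∨
               (π = (-rL - μ, -μ) ∧ -rL ≤ μ * (ψ - 1) / ψ)}) ∧
     (S = ∅ ↔ μ * (ψ - p) / (ψ * p) < -rL) ∧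
     S.Finite ∧ S.ncard ≤ 4) :=
  fisher_msv_solutions_general ψ p μ rL hψ hp0 hp1 hμ
end
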